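/- arXiv:2103.15962 — 5 statements merged into one kernel-verified Lean document; each statement's English description precedes it below -/
import Mathlib

section
/- Let x > 1 be irrational with OCF digits (aₙ(x), eₙ(x)) and OCF convergent numerators pₙ. Define F₁ = ∪_{k≥0} (2k+g, 2k+1), F₂ = ∪_{k≥1} [2k−1, 2k), and F₃ = ∪_{k≥1} [2k, 2k+g). Then for every n ≥ 1: if pₙ/pₙ₋₁ ∈ F₁ then aₙ = ⌊pₙ/pₙ₋₁⌋ + 1 and eₙ₋₁ = −1; if pₙ/pₙ₋₁ ∈ F₂ then aₙ = ⌊pₙ/pₙ₋₁⌋ and eₙ₋₁ = +1; and if pₙ/pₙ₋₁ ∈ F₃ then aₙ = ⌊pₙ/pₙ₋₁⌋ − 1 and eₙ₋₁ = +1. -/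
noncomputable section

/-- The golden ratio `G = (1+√5)/2`. -/
def Gphi : ℝ := (1 + Real.sqrt 5) / 2

/-- `g = (√5−1)/2`. -/
def gphi : ℝ := (Real.sqrt 5 - 1) / 2

/-- The first OCF digit `a₁(x)`: the unique odd integer `a` with `x ∈ [a−1, a+1)`. -/
def ocfA (x : ℝ) : ℤ := 2 * ⌊x / 2⌋ + 1

/-- The first OCF sign `e₁(x)`. -/
def ocfE (x : ℝ) : ℤ := if (ocfA x : ℝ) ≤ x then 1 else -1

/-- The Odd Gauss map `T_o`. -/
def To (x : ℝ) : ℝ := (ocfE x : ℝ) / (x - (ocfA x : ℝ))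

/-- `p`-convergents of the OCF expansion of `x`. -/
def ocfP (x : ℝ) : ℕ → ℤ
  | 0 => 1
  | 1 => ocfA x
  | (n+2) => ocfA (To^[n+1] x) * ocfP x (n+1) + ocfE (To^[n] x) * ocfP x n

/-! The key identity is `g (1 + g) = 1`, equivalently `(2 + g)(1 - g) = 1`. By induction,
`p_{n+1} > g p_n`, and even `p_{n+1} > (2 + g) p_n` when `e_{n+1} = -1` (then `a_{n+1} ≥ 3`).
Hence in `p_n / p_{n-1} = a_n + e_{n-1} p_{n-2} / p_{n-1}` the correction term lies in `(0, 1 + g)`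
when `e_{n-1} = 1` and in `(-(1 - g), 0)` when `e_{n-1} = -1`. Since `a_n` is odd, the integer
part and the position of the ratio relative to `⌊·⌋ + g` then determine `a_n` and `e_{n-1}`. -/

lemma gphi_pos : 0 < gphi := by
  unfold gphi
  nlinarith [Real.sq_sqrt (show (0 : ℝ) ≤ 5 by norm_num), Real.sqrt_nonneg 5]

lemma gphi_lt_one : gphi < 1 := by
  unfold gphi
  nlinarith [Real.sq_sqrt (show (0 : ℝ) ≤ 5 by norm_num), Real.sqrt_nonneg 5]

lemma gphi_mul_one_add_gphi : gphi * (1 + gphi) = 1 := by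
  unfold gphi
  nlinarith [Real.sq_sqrt (show (0 : ℝ) ≤ 5 by norm_num)]

lemma ocfA_odd (y : ℝ) : Odd (ocfA y) := ⟨_, rfl⟩

lemma ocfA_sub_one_le (y : ℝ) : (ocfA y : ℝ) - 1 ≤ y := by
  have := Int.floor_le (y / 2)
  unfold ocfA; push_cast; linarith

lemma lt_ocfA_add_one (y : ℝ) : y < ocfA y + 1 := by
  have := Int.lt_floor_add_one (y / 2)
  unfold ocfA; push_cast; linarith

lemma one_le_ocfA {y : ℝ} (hy : 1 < y) : 1 ≤ ocfA y := by
  have : 0 ≤ ⌊y / 2⌋ := Int.floor_nonneg.2 (by linarith)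
  unfold ocfA; omega

lemma ocfE_eq_one_or_neg_one (y : ℝ) : ocfE y = 1 ∨ ocfE y = -1 := by
  unfold ocfE; split_ifs <;> simp

lemma three_le_ocfA {y : ℝ} (hy : 1 < y) (he : ocfE y = -1) : 3 ≤ ocfA y := by
  have hlt : y < ocfA y := by
    by_contra! h
    simp [ocfE, h] at he
  have : 1 < ocfA y := by exact_mod_cast hy.trans hlt
  obtain ⟨j, hj⟩ := ocfA_odd y
  omega

lemma one_lt_To {y : ℝ} (hyi : Irrational y) : 1 < To y := by
  have hlo : (ocfA y : ℝ) - 1 < y :=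
    (ocfA_sub_one_le y).lt_of_ne (by simpa using (hyi.ne_int (ocfA y - 1)).symm)
  have hhi := lt_ocfA_add_one y
  have hne : y ≠ ocfA y := hyi.ne_int _
  unfold To ocfE
  split_ifs with hle
  · have hpos : 0 < y - ocfA y := sub_pos.2 (hle.lt_of_ne hne.symm)
    rw [Int.cast_one, lt_div_iff₀ hpos]
    linarith
  · have hneg : y - ocfA y < 0 := by linarith
    rw [Int.cast_neg, Int.cast_one, lt_div_iff_of_neg hneg]
    linarith

lemma irrational_To {y : ℝ} (hyi : Irrational y) : Irrational (To y) :=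
  (hyi.sub_intCast _).intCast_div (by rcases ocfE_eq_one_or_neg_one y with h | h <;> simp [h])

lemma irrational_iterate_To {x : ℝ} (hxi : Irrational x) (n : ℕ) : Irrational (To^[n] x) := by
  induction n with
  | zero => exact hxi
  | succ n ih => exact Function.iterate_succ_apply' To n x ▸ irrational_To ih

lemma one_lt_iterate_To {x : ℝ} (hx : 1 < x) (hxi : Irrational x) (n : ℕ) : 1 < To^[n] x := by
  cases n with
  | zero => exact hx
  | succ n => exact Function.iterate_succ_apply' To n x ▸ one_lt_To (irrational_iterate_To hxi n)

/-- Where `p_n / p_{n-1}` can lie, given the odd digit `a = a_n` and the sign `e = e_{n-1}`;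
the non-strict `a ≤ r` admits `n = 1`, where `r = a₁`. -/
def RatioWindow (a e : ℤ) (r : ℝ) : Prop :=
  (e = 1 ∧ a ≤ r ∧ r < a + 1 + gphi) ∨ (e = -1 ∧ a - 1 + gphi < r ∧ r < a)

lemma RatioWindow.sub_one_add_gphi_lt {a e : ℤ} {r : ℝ} (h : RatioWindow a e r) :
    a - 1 + gphi < r := by
  rcases h with ⟨-, h, -⟩ | ⟨-, h, -⟩ <;> linarith [gphi_lt_one]

lemma ratioWindow_of_recurrence (A : ℤ) {e : ℤ} {P₀ P₁ : ℝ} (hP₀ : 0 < P₀)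
    (hg : gphi * P₀ < P₁) (he : e = 1 ∨ e = -1) (hneg : e = -1 → (2 + gphi) * P₀ < P₁) :
    RatioWindow A e ((A * P₁ + e * P₀) / P₁) := by
  have hg₀ := gphi_pos
  have hgg := gphi_mul_one_add_gphi
  have hP₁ : 0 < P₁ := by nlinarith
  rcases he with rfl | rfl
  · refine Or.inl ⟨rfl, ?_, ?_⟩
    · rw [le_div_iff₀ hP₁]; push_cast; linarith
    · rw [div_lt_iff₀ hP₁]; push_cast; nlinarith
  · have h2 := hneg rfl
    refine Or.inr ⟨rfl, ?_, ?_⟩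
    · rw [lt_div_iff₀ hP₁]; push_cast; nlinarith
    · rw [div_lt_iff₀ hP₁]; push_cast; linarith

lemma ocfP_add_two (x : ℝ) (n : ℕ) :
    (ocfP x (n + 2) : ℝ) = ocfA (To^[n + 1] x) * ocfP x (n + 1) + ocfE (To^[n] x) * ocfP x n := by
  simp [ocfP]

lemma growth_of_digit_bound {y P₀ P₁ : ℝ} (hy : 1 < y) (hP₀ : 0 < P₀)
    (h : (ocfA y - 1 + gphi) * P₀ < P₁) :
    gphi * P₀ < P₁ ∧ (ocfE y = -1 → (2 + gphi) * P₀ < P₁) := by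
  have h1 : (1 : ℝ) ≤ ocfA y := by exact_mod_cast one_le_ocfA hy
  refine ⟨by nlinarith, fun he => ?_⟩
  have h3 : (3 : ℝ) ≤ ocfA y := by exact_mod_cast three_le_ocfA hy he
  nlinarith

lemma ocfP_growth {x : ℝ} (hx : 1 < x) (hxi : Irrational x) (n : ℕ) :
    0 < ocfP x n ∧ ((ocfA (To^[n] x) : ℝ) - 1 + gphi) * ocfP x n < ocfP x (n + 1) := by
  induction n with
  | zero =>
    simp only [ocfP, Function.iterate_zero, id_eq, Int.cast_one, mul_one, zero_lt_one, true_and]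
    linarith [gphi_lt_one]
  | succ n ih =>
    obtain ⟨hP, hlow⟩ := ih
    have hP' : (0 : ℝ) < ocfP x n := by exact_mod_cast hP
    obtain ⟨hg, hneg⟩ := growth_of_digit_bound (one_lt_iterate_To hx hxi n) hP' hlow
    have hP₁ : (0 : ℝ) < ocfP x (n + 1) := by nlinarith [gphi_pos]
    have hw := ratioWindow_of_recurrence (ocfA (To^[n + 1] x)) hP' hg
      (ocfE_eq_one_or_neg_one _) hneg
    rw [← ocfP_add_two] at hw
    exact ⟨by exact_mod_cast hP₁, (lt_div_iff₀ hP₁).1 hw.sub_one_add_gphi_lt⟩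

lemma ratioWindow_ocfP {x : ℝ} (hx : 1 < x) (hxi : Irrational x) {n : ℕ} (hn : 1 ≤ n) :
    RatioWindow (ocfA (To^[n - 1] x)) (if n = 1 then 1 else ocfE (To^[n - 2] x))
      (ocfP x n / ocfP x (n - 1)) := by
  obtain _ | _ | m := n
  · omega
  · refine Or.inl ⟨rfl, ?_, ?_⟩ <;> simp [ocfP]
    linarith [gphi_pos]
  · obtain ⟨hP, hlow⟩ := ocfP_growth hx hxi m
    have hP' : (0 : ℝ) < ocfP x m := by exact_mod_cast hP
    obtain ⟨hg, hneg⟩ := growth_of_digit_bound (one_lt_iterate_To hx hxi m) hP' hlow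
    simpa [ocfP_add_two] using
      ratioWindow_of_recurrence (ocfA (To^[m + 1] x)) hP' hg (ocfE_eq_one_or_neg_one _) hneg

def F₁ : Set ℝ := {r | ∃ k : ℕ, 2 * (k : ℝ) + gphi < r ∧ r < 2 * (k : ℝ) + 1}

def F₂ : Set ℝ := {r | ∃ k : ℕ, 1 ≤ k ∧ 2 * (k : ℝ) - 1 ≤ r ∧ r < 2 * (k : ℝ)}

def F₃ : Set ℝ := {r | ∃ k : ℕ, 1 ≤ k ∧ 2 * (k : ℝ) ≤ r ∧ r < 2 * (k : ℝ) + gphi}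

lemma even_floor_of_mem_F₁ {r : ℝ} (h : r ∈ F₁) : Even ⌊r⌋ ∧ ⌊r⌋ + gphi < r := by
  obtain ⟨k, h₁, h₂⟩ := h
  have hfl : ⌊r⌋ = 2 * (k : ℤ) := by
    rw [Int.floor_eq_iff]; push_cast; constructor <;> linarith [gphi_pos]
  exact ⟨⟨k, by omega⟩, by rw [hfl]; push_cast; exact h₁⟩

lemma odd_floor_of_mem_F₂ {r : ℝ} (h : r ∈ F₂) : Odd ⌊r⌋ := by
  obtain ⟨k, -, h₁, h₂⟩ := h
  have hfl : ⌊r⌋ = 2 * ((k : ℤ) - 1) + 1 := by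
    rw [Int.floor_eq_iff]; push_cast; constructor <;> linarith
  exact ⟨_, hfl⟩

lemma even_floor_of_mem_F₃ {r : ℝ} (h : r ∈ F₃) : Even ⌊r⌋ ∧ r < ⌊r⌋ + gphi := by
  obtain ⟨k, -, h₁, h₂⟩ := h
  have hfl : ⌊r⌋ = 2 * (k : ℤ) := by
    rw [Int.floor_eq_iff]; push_cast; constructor <;> linarith [gphi_lt_one]
  exact ⟨⟨k, by omega⟩, by rw [hfl]; push_cast; exact h₂⟩

lemma floor_of_le_of_lt_add_one_add_gphi {a : ℤ} {r : ℝ} (h₁ : a ≤ r) (h₂ : r < a + 1 + gphi) :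
    ⌊r⌋ = a ∨ (⌊r⌋ = a + 1 ∧ r < ⌊r⌋ + gphi) := by
  rcases lt_or_ge r (a + 1) with h | h
  · exact Or.inl (Int.floor_eq_iff.2 ⟨h₁, h⟩)
  · have hfl : ⌊r⌋ = a + 1 := by
      rw [Int.floor_eq_iff]; push_cast; constructor <;> linarith [gphi_lt_one]
    exact Or.inr ⟨hfl, by rw [hfl]; push_cast; exact h₂⟩

lemma floor_of_sub_one_add_gphi_lt_of_lt {a : ℤ} {r : ℝ} (h₁ : a - 1 + gphi < r) (h₂ : r < a) :
    ⌊r⌋ = a - 1 ∧ ⌊r⌋ + gphi < r := by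
  have hfl : ⌊r⌋ = a - 1 := by
    rw [Int.floor_eq_iff]; push_cast; constructor <;> linarith [gphi_pos]
  exact ⟨hfl, by rw [hfl]; push_cast; exact h₁⟩

lemma RatioWindow.digit_and_sign {a e : ℤ} {r : ℝ} (ha : Odd a) (h : RatioWindow a e r) :
    (r ∈ F₁ → a = ⌊r⌋ + 1 ∧ e = -1) ∧ (r ∈ F₂ → a = ⌊r⌋ ∧ e = 1) ∧
      (r ∈ F₃ → a = ⌊r⌋ - 1 ∧ e = 1) := by
  obtain ⟨j, rfl⟩ := ha
  rcases h with ⟨rfl, h₁, h₂⟩ | ⟨rfl, h₁, h₂⟩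
  · rcases floor_of_le_of_lt_add_one_add_gphi h₁ h₂ with hfl | ⟨hfl, hfrac⟩
    · refine ⟨fun hF => ?_, fun _ => ⟨hfl.symm, rfl⟩, fun hF => ?_⟩
      · obtain ⟨⟨i, hi⟩, -⟩ := even_floor_of_mem_F₁ hF; omega
      · obtain ⟨⟨i, hi⟩, -⟩ := even_floor_of_mem_F₃ hF; omega
    · refine ⟨fun hF => ?_, fun hF => ?_, fun _ => ⟨by omega, rfl⟩⟩
      · linarith [(even_floor_of_mem_F₁ hF).2]
      · obtain ⟨i, hi⟩ := odd_floor_of_mem_F₂ hF; omega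
  · obtain ⟨hfl, hfrac⟩ := floor_of_sub_one_add_gphi_lt_of_lt h₁ h₂
    refine ⟨fun _ => ⟨by omega, rfl⟩, fun hF => ?_, fun hF => ?_⟩
    · obtain ⟨i, hi⟩ := odd_floor_of_mem_F₂ hF; omega
    · linarith [(even_floor_of_mem_F₃ hF).2]

theorem digit_and_sign_from_convergents (x : ℝ) (hx : 1 < x) (hxi : Irrational x)
    (n : ℕ) (hn : 1 ≤ n) (r : ℝ) (hr : r = (ocfP x n : ℝ) / (ocfP x (n - 1) : ℝ))
    (eprev : ℤ) (he : eprev = if n = 1 then 1 else ocfE (To^[n - 2] x)) :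
    ((∃ k : ℕ, 2 * (k : ℝ) + gphi < r ∧ r < 2 * (k : ℝ) + 1) →
      ocfA (To^[n - 1] x) = ⌊r⌋ + 1 ∧ eprev = -1) ∧
    ((∃ k : ℕ, 1 ≤ k ∧ 2 * (k : ℝ) - 1 ≤ r ∧ r < 2 * (k : ℝ)) →
      ocfA (To^[n - 1] x) = ⌊r⌋ ∧ eprev = 1) ∧
    ((∃ k : ℕ, 1 ≤ k ∧ 2 * (k : ℝ) ≤ r ∧ r < 2 * (k : ℝ) + gphi) →
      ocfA (To^[n - 1] x) = ⌊r⌋ - 1 ∧ eprev = 1) := by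
  subst hr he
  exact (ratioWindow_ocfP hx hxi hn).digit_and_sign (ocfA_odd _)
end
end

section
/- Let P be the set of all finite products ∏ᵢ₌₁ⁿ [[aᵢ, eᵢ],[1, 0]] of 2×2 integer matrices, where n ≥ 1, each aᵢ is an odd positive integer, each eᵢ ∈ {+1,−1}, and aᵢ + eᵢ ≥ 2 for all i. Then P = S₊₁ ∪ S₋₁, where S₊₁ = { [[a, b],[c, d]] ∈ Γ̃ : a,b,c,d ≥ 0, 0 ≤ d ≤ b, 1 ≤ c ≤ a, a > g·b } and S₋₁ = { [[a, −b],[c, −d]] ∈ Γ̃ : a,b,c,d ≥ 0, 0 ≤ d ≤ b, 1 ≤ c ≤ a, a > (G+1)·b }. -/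
noncomputable section

/-- Entrywise congruence mod 2 of integer 2×2 matrices. -/
def Mod2Eq (σ τ : Matrix (Fin 2) (Fin 2) ℤ) : Prop := ∀ i j, σ i j % 2 = τ i j % 2

/-- `Γ̃ = {σ ∈ GL(2,ℤ) : σ ≡ I, A or B (mod 2)}`. -/
def GammaTilde : Set (Matrix (Fin 2) (Fin 2) ℤ) :=
  {σ | (σ.det = 1 ∨ σ.det = -1) ∧
    (Mod2Eq σ 1 ∨ Mod2Eq σ !![0, 1; 1, 1] ∨ Mod2Eq σ !![1, 1; 1, 0])}

/-- `S₊₁`. -/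
def Splus : Set (Matrix (Fin 2) (Fin 2) ℤ) :=
  {σ | σ ∈ GammaTilde ∧ 0 ≤ σ 0 0 ∧ 0 ≤ σ 0 1 ∧ 0 ≤ σ 1 0 ∧ 0 ≤ σ 1 1 ∧
    σ 1 1 ≤ σ 0 1 ∧ 1 ≤ σ 1 0 ∧ σ 1 0 ≤ σ 0 0 ∧ gphi * (σ 0 1 : ℝ) < (σ 0 0 : ℝ)}

/-- `S₋₁` (matrices of the form `[[a, −b],[c, −d]]`). -/
def Sminus : Set (Matrix (Fin 2) (Fin 2) ℤ) :=
  {σ | σ ∈ GammaTilde ∧ 0 ≤ σ 0 0 ∧ 0 ≤ -σ 0 1 ∧ 0 ≤ σ 1 0 ∧ 0 ≤ -σ 1 1 ∧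
    -σ 1 1 ≤ -σ 0 1 ∧ 1 ≤ σ 1 0 ∧ σ 1 0 ≤ σ 0 0 ∧
    (Gphi + 1) * ((-σ 0 1 : ℤ) : ℝ) < (σ 0 0 : ℝ)}

/-- The set `P` of finite products `∏ᵢ [[aᵢ, eᵢ],[1,0]]`. -/
def Pset : Set (Matrix (Fin 2) (Fin 2) ℤ) :=
  {M | ∃ (n : ℕ) (a e : ℕ → ℤ), 0 < n ∧
    (∀ i < n, Odd (a i) ∧ 0 < a i ∧ (e i = 1 ∨ e i = -1) ∧ 2 ≤ a i + e i) ∧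
    M = ((List.range n).map (fun i => !![a i, e i; 1, 0])).prod}

open Real goldenRatio Matrix Set

/-!
Write `σ = [[A, b], [C, d]]` and `φ = G`. Since `g = φ⁻¹` and `G + 1 = φ² = (2 - φ)⁻¹`,
the union `S₊₁ ∪ S₋₁` is the set of `σ ∈ Γ̃` with `1 ≤ C ≤ A`, `d` between `0` and `b`, and
`(φ - 2) A < b < φ A`; the sign of `b` tells which of the two sets `σ` lies in.

Right multiplication by `[[a, e], [1, 0]]` with `a + e ≥ 2` maps this cone into itself, which
gives `P ⊆ S₊₁ ∪ S₋₁`. Conversely, if `d = 0` then `σ` is a single factor. Otherwise write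
`b = e B` with `B > 0`; the window `(φ - 2) B < A - a B < φ B` has length `2 B` and irrational
endpoints, so it holds for exactly one odd `a`, and then `σ = τ [[a, e], [1, 0]]` with `τ` again
in the cone and with smaller `A + |b|`. Every factor is `≡ B ≡ A⁻¹ (mod 2)`, so the parity
condition of `Γ̃` passes between `σ` and `τ`; it also excludes the degenerate case `A = a B`.
-/

lemma gphi_eq : gphi = φ - 1 := by
  unfold gphi goldenRatio
  ring

lemma Gphi_eq : Gphi = φ := rfl

lemma three_halves_lt_goldenRatio : 3 / 2 < φ := by
  nlinarith [goldenRatio_sq, goldenRatio_pos, goldenRatio_lt_two]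

lemma mul_mem_Ioo_iff {ε B A : ℝ} (hε : ε = 1 ∨ ε = -1) (hB : 0 ≤ B) (hA : 0 < A) :
    ε * B ∈ Ioo ((φ - 2) * A) (φ * A) ↔ (φ - ε) * B < A := by
  have h2 := goldenRatio_sq
  have h1 := one_lt_goldenRatio
  have h3 := goldenRatio_lt_two
  rcases hε with rfl | rfl <;> simp only [mem_Ioo] <;> constructor
  · rintro ⟨-, h⟩
    nlinarith
  · intro h
    constructor <;> nlinarith
  · rintro ⟨h, -⟩
    nlinarith
  · intro h
    constructor <;> nlinarith

lemma exists_odd_mem_Ioo {x : ℝ} (hx : Irrational x) : ∃ a : ℤ, Odd a ∧ x < a ∧ a < x + 2 := by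
  refine ⟨2 * ⌊(x + 1) / 2⌋ + 1, odd_two_mul_add_one _, ?_, ?_⟩
  · have := Int.sub_one_lt_floor ((x + 1) / 2)
    push_cast
    linarith
  · have hle := Int.floor_le ((x + 1) / 2)
    have hne : (2 * ⌊(x + 1) / 2⌋ + 1 : ℝ) ≠ x + 2 := fun h =>
      hx.ne_int (2 * ⌊(x + 1) / 2⌋ - 1) (by push_cast; linarith)
    push_cast
    exact lt_of_le_of_ne (by linarith) hne

lemma one_le_mul_add_le_mul_add {A b C d a : ℤ} (hdet : A * d - b * C = 1 ∨ A * d - b * C = -1)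
    (hd : d ∈ uIcc 0 b) (hC : 1 ≤ C) (hCA : C ≤ A) (hbA : -A < 2 * b) (ha : 1 ≤ a) :
    1 ≤ a * C + d ∧ a * C + d ≤ a * A + b := by
  rcases mem_uIcc.1 hd with ⟨hd0, hdb⟩ | ⟨hbd, hd0⟩
  · constructor <;> nlinarith
  obtain ⟨B, rfl⟩ : ∃ B, b = -B := ⟨-b, by ring⟩
  obtain ⟨D, rfl⟩ : ∃ D, d = -D := ⟨-d, by ring⟩
  have hdet' : B * C - A * D = 1 ∨ B * C - A * D = -1 :=
    hdet.imp (fun h => by linarith) (fun h => by linarith)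
  have hDC : D < C := by
    by_contra! hCD
    have k1 : A * C ≤ A * D := mul_le_mul_of_nonneg_left hCD (by omega)
    have k2 : A - B ≤ (A - B) * C := le_mul_of_one_le_right (by omega) hC
    rcases hdet' with h | h <;> nlinarith
  have hBD : B - D ≤ A - C := by
    by_contra! h
    have k1 : B * (A - B + 1) ≤ B * (C - D) := mul_le_mul_of_nonneg_left (by omega) (by omega)
    have k2 : A - B ≤ (B - D) * (A - B) := le_mul_of_one_le_left (by omega) (by omega)
    rcases hdet' with h | h <;> nlinarith
  constructor <;> nlinarith

lemma sub_mul_mem_uIcc {A B C D a : ℤ} (hdet : B * C - A * D = 1 ∨ B * C - A * D = -1)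
    (hD : 1 ≤ D) (hDB : D ≤ B) (hCA : C ≤ A) (ht : -B < 2 * (A - a * B))
    (ht0 : A - a * B ≠ 0) : C - a * D ∈ uIcc 0 (A - a * B) := by
  have key : B * (C - a * D) = D * (A - a * B) + (B * C - A * D) := by ring
  set t := A - a * B
  set u := C - a * D
  rw [mem_uIcc]
  rcases ht0.lt_or_gt with hneg | hpos
  · right
    rcases hDB.lt_or_eq with hlt | rfl
    · have k : B * t ≤ (D + 1) * t := mul_le_mul_of_nonpos_right hlt hneg.le
      constructor <;> rcases hdet with h | h <;> nlinarith
    · have hD1 : D = 1 := by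
        refine Int.eq_one_of_dvd_one (by omega) ?_
        rcases hdet with h | h
        · exact ⟨C - A, by linarith⟩
        · exact ⟨A - C, by linarith⟩
      omega
  · left
    rcases hDB.lt_or_eq with hlt | rfl
    · have k : (D + 1) * t ≤ B * t := mul_le_mul_of_nonneg_right (by omega) hpos.le
      constructor <;> rcases hdet with h | h <;> nlinarith
    · have k : D * (C - A) ≤ 0 := mul_nonpos_of_nonneg_of_nonpos (by omega) (by omega)
      constructor <;> rcases hdet with h | h <;> nlinarith

lemma eq_one_of_sub_mul_eq_zero {A B C D a : ℤ} (hdet : B * C - A * D = 1 ∨ B * C - A * D = -1)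
    (hB : 0 ≤ B) (ht : A - a * B = 0) : B = 1 := by
  refine Int.eq_one_of_dvd_one hB ?_
  rcases hdet with h | h
  · exact ⟨C - a * D, by linear_combination -h - D * ht⟩
  · exact ⟨a * D - C, by linear_combination h + D * ht⟩

abbrev reduceModTwo : Matrix (Fin 2) (Fin 2) ℤ →+* Matrix (Fin 2) (Fin 2) (ZMod 2) :=
  (Int.castRingHom (ZMod 2)).mapMatrix

/-- The cyclic group generated by `A` in `GL(2, 𝔽₂)`; there `B = A⁻¹`. -/
def parityClass : Set (Matrix (Fin 2) (Fin 2) (ZMod 2)) := {1, !![0, 1; 1, 1], !![1, 1; 1, 0]}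

lemma mul_mem_parityClass {x y : Matrix (Fin 2) (Fin 2) (ZMod 2)} (hx : x ∈ parityClass)
    (hy : y = !![0, 1; 1, 1] ∨ y = !![1, 1; 1, 0]) : x * y ∈ parityClass := by
  simp only [parityClass, mem_insert_iff, mem_singleton_iff] at hx ⊢
  rcases hy with rfl | rfl <;> rcases hx with rfl | rfl | rfl <;> decide

section GammaTilde

variable {σ : Matrix (Fin 2) (Fin 2) ℤ} {a e : ℤ}

lemma mod2Eq_iff {τ : Matrix (Fin 2) (Fin 2) ℤ} :
    Mod2Eq σ τ ↔ reduceModTwo σ = reduceModTwo τ := by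
  simp [Mod2Eq, ← Matrix.ext_iff, ZMod.intCast_eq_intCast_iff']

lemma mem_GammaTilde_iff :
    σ ∈ GammaTilde ↔ (σ.det = 1 ∨ σ.det = -1) ∧ reduceModTwo σ ∈ parityClass := by
  have hA : reduceModTwo !![0, 1; 1, 1] = !![0, 1; 1, 1] := by decide
  have hB : reduceModTwo !![1, 1; 1, 0] = !![1, 1; 1, 0] := by decide
  simp only [GammaTilde, mem_ofPred_eq, mod2Eq_iff, map_one, hA, hB, parityClass, mem_insert_iff,
    mem_singleton_iff]

lemma emod_two_of_mem_GammaTilde (h : σ ∈ GammaTilde) :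
    σ 0 1 % 2 = σ 1 0 % 2 ∧ σ 1 1 % 2 = (σ 0 0 + σ 1 0) % 2 := by
  obtain ⟨-, h | h | h⟩ := h <;>
  · have h00 := h 0 0
    have h01 := h 0 1
    have h10 := h 1 0
    have h11 := h 1 1
    simp at h00 h01 h10 h11
    omega

def cfMatrix (a e : ℤ) : Matrix (Fin 2) (Fin 2) ℤ := !![a, e; 1, 0]

def Admissible (a e : ℤ) : Prop := Odd a ∧ 0 < a ∧ (e = 1 ∨ e = -1) ∧ 2 ≤ a + e

lemma det_cfMatrix (a e : ℤ) : (cfMatrix a e).det = -e := by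
  simp [cfMatrix, det_fin_two_of]

lemma mul_cfMatrix (σ : Matrix (Fin 2) (Fin 2) ℤ) (a e : ℤ) :
    σ * cfMatrix a e = !![σ 0 0 * a + σ 0 1, σ 0 0 * e; σ 1 0 * a + σ 1 1, σ 1 0 * e] := by
  rw [cfMatrix, eta_fin_two σ, mul_fin_two]
  simp

lemma reduceModTwo_cfMatrix (ha : Odd a) (he : e = 1 ∨ e = -1) :
    reduceModTwo (cfMatrix a e) = !![1, 1; 1, 0] := by
  have ha' : (a : ZMod 2) = 1 := ZMod.intCast_eq_one_iff_odd.2 ha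
  rcases he with rfl | rfl <;> ext i j <;> fin_cases i <;> fin_cases j <;>
    simp [cfMatrix, ha']

lemma mul_cfMatrix_mem_GammaTilde_iff (ha : Odd a) (he : e = 1 ∨ e = -1) :
    σ * cfMatrix a e ∈ GammaTilde ↔ σ ∈ GammaTilde := by
  simp only [mem_GammaTilde_iff, det_mul, det_cfMatrix, map_mul, reduceModTwo_cfMatrix ha he]
  refine and_congr (by rcases he with rfl | rfl <;> omega) ⟨fun h => ?_, fun h =>
    mul_mem_parityClass h (Or.inr rfl)⟩
  have hinv : (!![1, 1; 1, 0] : Matrix (Fin 2) (Fin 2) (ZMod 2)) * !![0, 1; 1, 1] = 1 := by decide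
  simpa [mul_assoc, hinv] using mul_mem_parityClass h (Or.inl rfl)

end GammaTilde

section Pset

variable {σ : Matrix (Fin 2) (Fin 2) ℤ} {a e : ℤ}

lemma cfMatrix_mem_Pset (h : Admissible a e) : cfMatrix a e ∈ Pset :=
  ⟨1, fun _ => a, fun _ => e, one_pos, fun _ _ => h, by simp [cfMatrix]⟩

lemma mul_cfMatrix_mem_Pset (hσ : σ ∈ Pset) (h : Admissible a e) : σ * cfMatrix a e ∈ Pset := by
  obtain ⟨n, f, g, hn, hfg, rfl⟩ := hσ
  refine ⟨n + 1, Function.update f n a, Function.update g n e, n.succ_pos, fun i hi => ?_, ?_⟩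
  · rcases (Nat.lt_succ_iff.1 hi).lt_or_eq with hi | rfl
    · simpa [hi.ne] using hfg i hi
    · simp only [Function.update_self]
      exact h
  · rw [List.range_succ, List.map_append, List.prod_append]
    simp only [List.map_cons, List.map_nil, List.prod_cons, List.prod_nil, mul_one,
      Function.update_self, cfMatrix]
    congr 2
    refine List.map_congr_left fun i hi => ?_
    simp [(List.mem_range.1 hi).ne]

theorem Pset_induction {p : Matrix (Fin 2) (Fin 2) ℤ → Prop}
    (base : ∀ a e, Admissible a e → p (cfMatrix a e))
    (step : ∀ σ a e, p σ → Admissible a e → p (σ * cfMatrix a e)) (hσ : σ ∈ Pset) : p σ := by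
  obtain ⟨n, f, g, hn, hfg, rfl⟩ := hσ
  induction n with
  | zero => omega
  | succ n ih =>
    rw [List.range_succ, List.map_append, List.prod_append]
    simp only [List.map_cons, List.map_nil, List.prod_cons, List.prod_nil, mul_one]
    rcases n.eq_zero_or_pos with rfl | hn
    · simpa [cfMatrix] using base (f 0) (g 0) (hfg 0 one_pos)
    · exact step _ _ _ (ih hn fun i hi => hfg i (by omega)) (hfg n (by omega))

end Pset

section GoldenCone

def IsGoldenReduced (σ : Matrix (Fin 2) (Fin 2) ℤ) : Prop :=
  σ ∈ GammaTilde ∧ 1 ≤ σ 1 0 ∧ σ 1 0 ≤ σ 0 0 ∧ σ 1 1 ∈ uIcc 0 (σ 0 1) ∧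
    (σ 0 1 : ℝ) ∈ Ioo ((φ - 2) * σ 0 0) (φ * σ 0 0)

variable {σ : Matrix (Fin 2) (Fin 2) ℤ} {a e : ℤ}

lemma isGoldenReduced_iff_exists_sign :
    IsGoldenReduced σ ↔ σ ∈ GammaTilde ∧ 1 ≤ σ 1 0 ∧ σ 1 0 ≤ σ 0 0 ∧
      ∃ ε B D : ℤ, (ε = 1 ∨ ε = -1) ∧ σ 0 1 = ε * B ∧ σ 1 1 = ε * D ∧ 0 ≤ D ∧ D ≤ B ∧
        (φ - ε) * B < σ 0 0 := by
  refine and_congr_right fun _ => and_congr_right fun hC => and_congr_right fun hCA => ?_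
  have hA : (0 : ℝ) < σ 0 0 := by exact_mod_cast (show (0 : ℤ) < σ 0 0 by omega)
  constructor
  · rintro ⟨hd, hb⟩
    obtain ⟨ε, B, D, hε, hbε, hdε, hD, hDB⟩ : ∃ ε B D : ℤ, (ε = 1 ∨ ε = -1) ∧ σ 0 1 = ε * B ∧
        σ 1 1 = ε * D ∧ 0 ≤ D ∧ D ≤ B := by
      rcases mem_uIcc.1 hd with ⟨h0, h1⟩ | ⟨h1, h0⟩
      · exact ⟨1, _, _, Or.inl rfl, (one_mul _).symm, (one_mul _).symm, h0, h1⟩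
      · exact ⟨-1, -σ 0 1, -σ 1 1, Or.inr rfl, by ring, by ring, by omega, by omega⟩
    refine ⟨ε, B, D, hε, hbε, hdε, hD, hDB, (mul_mem_Ioo_iff ?_ ?_ hA).1 ?_⟩
    · exact_mod_cast hε
    · exact_mod_cast hD.trans hDB
    · rw [hbε] at hb
      exact_mod_cast hb
  · rintro ⟨ε, B, D, hε, hb, hd, hD, hDB, h⟩
    rw [hb, hd]
    refine ⟨by rcases hε with rfl | rfl <;> simp [mem_uIcc] <;> omega, ?_⟩
    push_cast
    exact (mul_mem_Ioo_iff (by exact_mod_cast hε) (by exact_mod_cast hD.trans hDB) hA).2 h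

lemma mem_Splus_union_Sminus_iff :
    σ ∈ Splus ∪ Sminus ↔ IsGoldenReduced σ := by
  rw [isGoldenReduced_iff_exists_sign]
  constructor
  · rintro (⟨hΓ, -, -, -, hD, hDB, hC, hCA, h⟩ | ⟨hΓ, -, -, -, hD, hDB, hC, hCA, h⟩)
    · refine ⟨hΓ, hC, hCA, 1, σ 0 1, σ 1 1, Or.inl rfl, (one_mul _).symm, (one_mul _).symm, hD,
        hDB, ?_⟩
      rw [gphi_eq] at h
      exact_mod_cast h
    · refine ⟨hΓ, hC, hCA, -1, -σ 0 1, -σ 1 1, Or.inr rfl, by ring, by ring, hD, hDB, ?_⟩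
      rw [Gphi_eq] at h
      push_cast at h ⊢
      linarith
  · rintro ⟨hΓ, hC, hCA, ε, B, D, rfl | rfl, hb, hd, hD, hDB, h⟩
    · left
      refine ⟨hΓ, by omega, by omega, by omega, by omega, by omega, hC, hCA, ?_⟩
      rw [gphi_eq, hb]
      push_cast at h ⊢
      linarith
    · right
      refine ⟨hΓ, by omega, by omega, by omega, by omega, by omega, hC, hCA, ?_⟩
      rw [Gphi_eq, hb]
      push_cast at h ⊢
      linarith

lemma cfMatrix_isGoldenReduced (h : Admissible a e) : IsGoldenReduced (cfMatrix a e) := by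
  obtain ⟨ha, ha0, he, hae⟩ := h
  have hΓ : cfMatrix a e ∈ GammaTilde := by
    simpa using (mul_cfMatrix_mem_GammaTilde_iff (σ := 1) ha he).2
      ⟨Or.inl det_one, Or.inl fun _ _ => rfl⟩
  refine isGoldenReduced_iff_exists_sign.2 ⟨hΓ, by simp [cfMatrix], by simp [cfMatrix]; omega,
    e, 1, 0, he, by simp [cfMatrix], by simp [cfMatrix], le_rfl, zero_le_one, ?_⟩
  have : (2 : ℝ) ≤ a + e := by exact_mod_cast hae
  simp only [cfMatrix, of_apply, cons_val', cons_val_zero, empty_val', cons_val_fin_one]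
  push_cast
  linarith [goldenRatio_lt_two]

lemma IsGoldenReduced.mul_cfMatrix (hσ : IsGoldenReduced σ) (h : Admissible a e) :
    IsGoldenReduced (σ * cfMatrix a e) := by
  obtain ⟨ha, ha0, he, hae⟩ := h
  obtain ⟨hΓ, hC, hCA, hd, hb⟩ := hσ
  have hdet : σ 0 0 * σ 1 1 - σ 0 1 * σ 1 0 = 1 ∨ σ 0 0 * σ 1 1 - σ 0 1 * σ 1 0 = -1 := by
    rw [← det_fin_two]
    exact hΓ.1
  have hbA : -σ 0 0 < 2 * σ 0 1 := by
    have hA : (1 : ℝ) ≤ σ 0 0 := by exact_mod_cast hC.trans hCA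
    have : (-σ 0 0 : ℝ) < 2 * σ 0 1 := by
      nlinarith [hb.1, three_halves_lt_goldenRatio]
    exact_mod_cast this
  obtain ⟨h1, h2⟩ := one_le_mul_add_le_mul_add hdet hd hC hCA hbA ha0
  have hΓ' := (mul_cfMatrix_mem_GammaTilde_iff ha he).2 hΓ
  rw [_root_.mul_cfMatrix] at hΓ' ⊢
  refine isGoldenReduced_iff_exists_sign.2 ⟨hΓ', ?_, ?_, e, σ 0 0, σ 1 0, he, ?_, ?_, by omega,
    hCA, ?_⟩ <;>
    simp only [of_apply, cons_val', cons_val_zero, cons_val_one, empty_val', cons_val_fin_one]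
  · linarith
  · linarith
  · ring
  · ring
  · have hae' : (2 : ℝ) ≤ a + e := by exact_mod_cast hae
    have hA : (0 : ℝ) ≤ σ 0 0 := by exact_mod_cast (zero_le_one.trans hC).trans hCA
    push_cast
    calc (φ - e) * σ 0 0 ≤ (φ - 2 + a) * σ 0 0 := mul_le_mul_of_nonneg_right (by linarith) hA
      _ = (φ - 2) * σ 0 0 + σ 0 0 * a := by ring
      _ < σ 0 1 + σ 0 0 * a := by linarith [hb.1]
      _ = σ 0 0 * a + σ 0 1 := by ring

lemma exists_admissible_mem_Ioo {A B ε : ℤ} (hε : ε = 1 ∨ ε = -1) (hB : 0 < B)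
    (h : (φ - ε) * B < A) :
    ∃ a, Admissible a ε ∧ ((A - a * B : ℤ) : ℝ) ∈ Ioo ((φ - 2) * B) (φ * B) ∧ |A - a * B| < A := by
  have hBR : (0 : ℝ) < B := by exact_mod_cast hB
  have hx : Irrational (A / B - φ) := by
    simpa using goldenRatio_irrational.ratCast_sub ((A : ℚ) / B)
  obtain ⟨a, ha, hlo, hhi⟩ := exists_odd_mem_Ioo hx
  have hlo' : (A : ℝ) - φ * B < a * B := by
    have := mul_lt_mul_of_pos_right hlo hBR
    rwa [sub_mul, div_mul_cancel₀ _ hBR.ne'] at this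
  have hhi' : (a : ℝ) * B < A - φ * B + 2 * B := by
    have := mul_lt_mul_of_pos_right hhi hBR
    rwa [add_mul, sub_mul, div_mul_cancel₀ _ hBR.ne'] at this
  have hεR : (ε : ℝ) ≤ 1 := by rcases hε with rfl | rfl <;> norm_num
  have hae : 0 < a + ε := by
    have : (0 : ℝ) < (a + ε) * B := by linarith
    exact_mod_cast pos_of_mul_pos_left this hBR.le
  have ha2 := Int.odd_iff.1 ha
  have ha1 : 1 ≤ a := by omega
  refine ⟨a, ⟨ha, by omega, hε, by omega⟩, ?_, ?_⟩
  · push_cast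
    constructor <;> linarith
  · have hpos : 0 < a * B := mul_pos (by omega) hB
    have hneg : ((a * B - A : ℤ) : ℝ) < A := by
      have h3 := three_halves_lt_goldenRatio
      push_cast
      nlinarith [mul_nonneg (sub_nonneg.2 hεR) hBR.le]
    rw [abs_lt]
    constructor
    · have : a * B - A < A := by exact_mod_cast hneg
      omega
    · omega

lemma matrix_eq_mul_cfMatrix (A B C D a ε : ℤ) :
    !![A, ε * B; C, ε * D] = !![B, A - a * B; D, C - a * D] * cfMatrix a ε := by
  rw [mul_cfMatrix]
  simp only [of_apply, cons_val', cons_val_zero, cons_val_one, empty_val', cons_val_fin_one]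
  ring_nf

lemma isGoldenReduced_of_mul_cfMatrix {A B C D a ε : ℤ} (hε : ε = 1 ∨ ε = -1) (ha : Odd a)
    (hΓ : !![A, ε * B; C, ε * D] ∈ GammaTilde) (hD : 1 ≤ D) (hDB : D ≤ B) (hCA : C ≤ A)
    (ht : ((A - a * B : ℤ) : ℝ) ∈ Ioo ((φ - 2) * B) (φ * B)) :
    IsGoldenReduced !![B, A - a * B; D, C - a * D] := by
  rw [matrix_eq_mul_cfMatrix _ _ _ _ a, mul_cfMatrix_mem_GammaTilde_iff ha hε] at hΓ
  have hdet : B * C - A * D = 1 ∨ B * C - A * D = -1 := by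
    have h := hΓ.1
    rw [det_fin_two_of] at h
    exact h.imp (fun h => by linarith) (fun h => by linarith)
  have h2t : -B < 2 * (A - a * B) := by
    have hBR : (1 : ℝ) ≤ B := by exact_mod_cast hD.trans hDB
    have : (-B : ℝ) < 2 * ((A - a * B : ℤ) : ℝ) := by
      nlinarith [ht.1, three_halves_lt_goldenRatio]
    exact_mod_cast this
  have ht0 : A - a * B ≠ 0 := by
    intro h0
    have hB1 := eq_one_of_sub_mul_eq_zero hdet (by omega) h0
    have := (emod_two_of_mem_GammaTilde hΓ).1
    simp only [of_apply, cons_val', cons_val_zero, cons_val_one, empty_val', cons_val_fin_one,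
      h0] at this
    omega
  have hu := sub_mul_mem_uIcc hdet hD hDB hCA h2t ht0
  refine ⟨hΓ, by simpa using hD, by simpa using hDB, by simpa using hu, by simpa using ht⟩

lemma eq_cfMatrix_of_corner_eq_zero {A B C ε : ℤ} (hε : ε = 1 ∨ ε = -1)
    (hΓ : !![A, ε * B; C, 0] ∈ GammaTilde) (hB : 0 ≤ B) (hC : 1 ≤ C) (h : (φ - ε) * B < A) :
    Admissible A ε ∧ !![A, ε * B; C, 0] = cfMatrix A ε := by
  have hBC : B * C = 1 := by
    have h := hΓ.1
    rw [det_fin_two_of] at h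
    rcases hε with rfl | rfl <;> rcases h with h | h <;> nlinarith
  have hB1 : B = 1 := Int.eq_one_of_mul_eq_one_right hB hBC
  have hC1 : C = 1 := by rw [hB1, one_mul] at hBC; exact hBC
  subst hB1 hC1
  have hpar := (emod_two_of_mem_GammaTilde hΓ).2
  simp at hpar
  have hAε : (1 : ℝ) < A + ε := by
    push_cast at h
    linarith [one_lt_goldenRatio]
  have hAε' : 1 < A + ε := by exact_mod_cast hAε
  refine ⟨⟨Int.odd_iff.2 (by omega), by omega, hε, by omega⟩, by simp [cfMatrix]⟩

theorem IsGoldenReduced.mem_Pset {σ : Matrix (Fin 2) (Fin 2) ℤ} (hσ : IsGoldenReduced σ) :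
    σ ∈ Pset := by
  obtain ⟨hΓ, hC, hCA, ε, B, D, hε, hb, hd, hD, hDB, h⟩ := isGoldenReduced_iff_exists_sign.1 hσ
  have hσ_eq : σ = !![σ 0 0, ε * B; σ 1 0, ε * D] := by
    rw [← hb, ← hd]
    exact eta_fin_two σ
  rw [hσ_eq] at hΓ ⊢
  rcases hD.eq_or_lt with rfl | hD1
  · rw [mul_zero] at hΓ ⊢
    obtain ⟨hadm, heq⟩ := eq_cfMatrix_of_corner_eq_zero hε hΓ (hD.trans hDB) hC h
    rw [heq]
    exact cfMatrix_mem_Pset hadm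
  · obtain ⟨a, hadm, ht, hsize⟩ := exists_admissible_mem_Ioo hε (by omega) h
    rw [matrix_eq_mul_cfMatrix _ _ _ _ a]
    exact mul_cfMatrix_mem_Pset
      (isGoldenReduced_of_mul_cfMatrix hε hadm.1 hΓ hD1 hDB hCA ht).mem_Pset hadm
termination_by (σ 0 0 + |σ 0 1|).toNat
decreasing_by
  have habs : |σ 0 1| = B := by
    rw [hb, abs_mul, abs_of_nonneg (hD.trans hDB)]
    rcases hε with rfl | rfl <;> simp
  simp only [of_apply, cons_val', cons_val_zero, cons_val_one, empty_val', cons_val_fin_one, habs]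
  omega

end GoldenCone

theorem Pset_eq_Splus_union_Sminus : Pset = Splus ∪ Sminus := by
  ext σ
  rw [mem_Splus_union_Sminus_iff]
  exact ⟨Pset_induction (fun _ _ => cfMatrix_isGoldenReduced) (fun _ _ _ hσ h => hσ.mul_cfMatrix h),
    IsGoldenReduced.mem_Pset⟩
end
end

section
/- For every ε > 0 and K > 0 there is a constant C = C(ε,K) such that for r ∈ {1,2} and all N ≥ 1, #A_{N,r}(K) ≤ C·N^{3/2+ε}. -/
noncomputable section

/-- `A_{N,1}(K)` (here `b = |σ 0 1|`, `d = |σ 1 1|`). -/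
def A1set (K : ℝ) (N : ℕ) : Set (Matrix (Fin 2) (Fin 2) ℤ) :=
  {σ | σ ∈ Splus ∪ Sminus ∧
    (|σ 0 1| : ℝ) * ((|σ 0 1| : ℝ) - (2 - Gphi) * (|σ 1 1| : ℝ)) ≤ Gphi * (N : ℝ) ∧
    (σ 0 0 : ℝ) ≤ K * (N : ℝ)}

/-- `A_{N,2}(K)`. -/
def A2set (K : ℝ) (N : ℕ) : Set (Matrix (Fin 2) (Fin 2) ℤ) :=
  {σ | σ ∈ Splus ∪ Sminus ∧
    (σ 1 0 : ℝ) * (|σ 1 1| : ℝ) ≤ (N : ℝ) ∧ (σ 0 0 : ℝ) ≤ K * (N : ℝ)}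

/-! ### Auxiliary lemmas -/

lemma sqrt5_sq : Real.sqrt 5 ^ 2 = 5 := Real.sq_sqrt (by norm_num)
lemma sqrt5_ge : (2:ℝ) ≤ Real.sqrt 5 := by nlinarith [sqrt5_sq, Real.sqrt_nonneg 5]
lemma sqrt5_le : Real.sqrt 5 ≤ 3 := by nlinarith [sqrt5_sq, Real.sqrt_nonneg 5]
lemma Gphi_ge : (3/2:ℝ) ≤ Gphi := by unfold Gphi; nlinarith [sqrt5_ge]
lemma Gphi_le : Gphi ≤ 2 := by unfold Gphi; nlinarith [sqrt5_le]
lemma gphi_Gphi : gphi * Gphi = 1 := by unfold gphi Gphi; nlinarith [sqrt5_sq]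
lemma Gphi_sub_one : Gphi - 1 = gphi := by unfold gphi Gphi; ring
lemma gphi_ge : (1/2:ℝ) ≤ gphi := by rw [← Gphi_sub_one]; linarith [Gphi_ge]

lemma real_key1 {b d Nr : ℝ} (hNr : 1 ≤ Nr) (hd0 : 0 ≤ d) (hdb : d ≤ b)
    (hb : b * (b - (2 - Gphi) * d) ≤ Gphi * Nr) : b ≤ 2 * Real.sqrt Nr := by
  set s := Real.sqrt Nr with hs
  have hs2 : s ^ 2 = Nr := Real.sq_sqrt (by linarith)
  have hs1 : 1 ≤ s := by nlinarith [Real.sqrt_nonneg Nr]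
  have hG1 := Gphi_ge
  have hG2 := Gphi_le
  have hb0 : 0 ≤ b := le_trans hd0 hdb
  have hstep : (2 - Gphi) * d ≤ (2 - Gphi) * b := by nlinarith
  have h1 : b * b * (Gphi - 1) ≤ Gphi * Nr := by
    nlinarith [mul_le_mul_of_nonneg_left hstep hb0]
  nlinarith [sq_nonneg (b - 2*s), sq_nonneg (b + 2*s)]

lemma real_key2 {a b c d Nr : ℝ} (hNr : 1 ≤ Nr) (ha : 1 ≤ a) (hc : 1 ≤ c)
    (hb0 : 0 ≤ b) (hd0 : 0 ≤ d) (hdet : a * d - 1 ≤ b * c)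
    (hbG : b ≤ Gphi * a) (hcd : c * d ≤ Nr) : d ≤ 3 * Real.sqrt Nr := by
  set s := Real.sqrt Nr with hs
  have hs2 : s ^ 2 = Nr := Real.sq_sqrt (by linarith)
  have hs1 : 1 ≤ s := by nlinarith [Real.sqrt_nonneg Nr]
  have hG1 := Gphi_ge
  have hG2 := Gphi_le
  have h1 : d ≤ Gphi * c + 1 := by nlinarith
  have h2 : d * d ≤ 2 * Nr + d := by nlinarith
  rcases le_or_gt d 3 with h | h
  · linarith
  · have h3 : d * d ≤ 3 * Nr := by nlinarith
    nlinarith [sq_nonneg (d - 3*s)]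

lemma bG_plus {a b : ℝ} (h : gphi * b < a) (hb0 : 0 ≤ b) : b ≤ Gphi * a := by
  have h1 := gphi_Gphi
  have h2 := Gphi_ge
  have h3 := gphi_ge
  nlinarith

lemma bG_minus {a b : ℝ} (h : (Gphi + 1) * b < a) (hb0 : 0 ≤ b) : b ≤ Gphi * a := by
  have h2 := Gphi_ge
  have h4 := Gphi_le
  have h5 : Gphi * ((Gphi + 1) * b) < Gphi * a :=
    mul_lt_mul_of_pos_left h (by linarith)
  have h6 : b ≤ Gphi * ((Gphi + 1) * b) := by
    nlinarith [mul_nonneg (show (0:ℝ) ≤ Gphi * (Gphi + 1) - 1 by nlinarith) hb0]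
  linarith

lemma int_ediv_cast_le {q c : ℤ} (hc : 0 < c) :
    ((q / c : ℤ) : ℝ) ≤ (q : ℝ) / (c : ℝ) := by
  rw [le_div_iff₀ (by exact_mod_cast hc)]
  have h1 := Int.mul_ediv_add_emod q c
  have h2 := Int.emod_nonneg q (by omega : c ≠ 0)
  have : (c : ℝ) * ((q / c : ℤ) : ℝ) ≤ ((q : ℤ) : ℝ) := by
    exact_mod_cast (by omega : c * (q / c) ≤ q)
  linarith

lemma coprime_of_eq {x y u v e : ℤ} (h : u*x + v*y = e) (he : e = 1 ∨ e = -1) :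
    IsCoprime x y := by
  rcases he with rfl | rfl
  · exact ⟨u, v, h⟩
  · exact ⟨-u, -v, by linarith⟩

lemma key1 {m u v : ℤ} (hm : 0 < m) (hdvd : m ∣ u - v) (h0 : u = 0 ↔ v = 0)
    (hu : 0 ≤ u) (hu' : u ≤ m) (hv : 0 ≤ v) (hv' : v ≤ m) : u = v := by
  obtain ⟨k, hk⟩ := hdvd
  have habs : |u - v| ≤ |m| := by rw [abs_of_pos hm, abs_le]; omega
  rw [hk, abs_mul, abs_of_pos hm] at habs
  have hk1 : |k| ≤ 1 := by nlinarith [abs_nonneg k]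
  rw [abs_le] at hk1
  obtain ⟨hl, hr⟩ := hk1
  interval_cases k <;> omega

lemma det_pm {σ : Matrix (Fin 2) (Fin 2) ℤ} (h : σ ∈ Splus ∪ Sminus) :
    σ 0 0 * σ 1 1 - σ 0 1 * σ 1 0 = 1 ∨ σ 0 0 * σ 1 1 - σ 0 1 * σ 1 0 = -1 := by
  have hd : σ.det = σ 0 0 * σ 1 1 - σ 0 1 * σ 1 0 := by
    rw [Matrix.det_fin_two]
  rcases h with h | h
  · rcases h.1.1 with h1 | h1 <;> rw [← hd] <;> [left; right] <;> exact h1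
  · rcases h.1.1 with h1 | h1 <;> rw [← hd] <;> [left; right] <;> exact h1

lemma col_cases {σ : Matrix (Fin 2) (Fin 2) ℤ} (h : σ ∈ Splus ∪ Sminus) :
    (0 < σ 0 1 ∧ 0 ≤ σ 1 1 ∧ σ 1 1 ≤ σ 0 1) ∨
    (σ 0 1 < 0 ∧ σ 0 1 ≤ σ 1 1 ∧ σ 1 1 ≤ 0) := by
  have hd := det_pm h
  rcases h with h | h
  · obtain ⟨-, -, hb, -, hdd, hdb, -, -, -⟩ := h
    left
    refine ⟨?_, hdd, hdb⟩
    rcases lt_or_eq_of_le hb with h' | h'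
    · exact h'
    · exfalso
      have hb0 : σ 0 1 = 0 := h'.symm
      have hd0 : σ 1 1 = 0 := by omega
      rw [hb0, hd0] at hd; omega
  · obtain ⟨-, -, hb, -, hdd, hdb, -, -, -⟩ := h
    right
    refine ⟨?_, by omega, by omega⟩
    rcases lt_or_eq_of_le hb with h' | h'
    · omega
    · exfalso
      have hb0 : σ 0 1 = 0 := by omega
      have hd0 : σ 1 1 = 0 := by omega
      rw [hb0, hd0] at hd; omega

lemma c_pos {σ : Matrix (Fin 2) (Fin 2) ℤ} (h : σ ∈ Splus ∪ Sminus) : 1 ≤ σ 1 0 := by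
  rcases h with h | h
  · exact h.2.2.2.2.2.2.1
  · exact h.2.2.2.2.2.2.1

lemma a_pos {σ : Matrix (Fin 2) (Fin 2) ℤ} (h : σ ∈ Splus ∪ Sminus) : 1 ≤ σ 0 0 := by
  have h1 := c_pos h
  rcases h with h | h
  · linarith [h.2.2.2.2.2.2.2.1]
  · linarith [h.2.2.2.2.2.2.2.1]

lemma injOn_f1 : Set.InjOn
    (fun σ : Matrix (Fin 2) (Fin 2) ℤ => (σ 0 0, σ 0 1, σ.det, decide (σ 1 1 = 0)))
    (Splus ∪ Sminus) := by
  intro σ hσ τ hτ heq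
  simp only [Prod.mk.injEq, decide_eq_decide] at heq
  obtain ⟨h00, h01, hdet, hiff⟩ := heq
  have hdσ : σ.det = σ 0 0 * σ 1 1 - σ 0 1 * σ 1 0 := by rw [Matrix.det_fin_two]
  have hdτ : τ.det = τ 0 0 * τ 1 1 - τ 0 1 * τ 1 0 := by rw [Matrix.det_fin_two]
  have E : σ 0 0 * (σ 1 1 - τ 1 1) = σ 0 1 * (σ 1 0 - τ 1 0) := by
    have := hdet
    rw [hdσ, hdτ, ← h00, ← h01] at this
    ring_nf
    ring_nf at this
    linarith
  have hepm := det_pm hσ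
  have cop : IsCoprime (σ 0 1) (σ 0 0) := by
    rcases hepm with h | h
    · exact coprime_of_eq (e := 1) (by linarith : (-(σ 1 0)) * σ 0 1 + (σ 1 1) * σ 0 0 = 1) (Or.inl rfl)
    · exact coprime_of_eq (e := -1) (by linarith : (-(σ 1 0)) * σ 0 1 + (σ 1 1) * σ 0 0 = -1) (Or.inr rfl)
  have hdvd : σ 0 1 ∣ σ 1 1 - τ 1 1 := by
    have h1 : σ 0 1 ∣ σ 0 0 * (σ 1 1 - τ 1 1) := ⟨σ 1 0 - τ 1 0, E⟩
    exact cop.dvd_of_dvd_mul_left h1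
  have hcσ := col_cases hσ
  have hcτ := col_cases hτ
  have h11 : σ 1 1 = τ 1 1 := by
    rcases hcσ with ⟨hb, hd1, hd2⟩ | ⟨hb, hd1, hd2⟩
    · rcases hcτ with ⟨hb', hd1', hd2'⟩ | ⟨hb', hd1', hd2'⟩
      · exact key1 hb hdvd hiff hd1 hd2 hd1' (h01 ▸ hd2')
      · omega
    · rcases hcτ with ⟨hb', hd1', hd2'⟩ | ⟨hb', hd1', hd2'⟩
      · omega
      · have : -σ 1 1 = -τ 1 1 := by
          refine key1 (m := -σ 0 1) (by omega) ?_ (by omega) (by omega) (by omega) (by omega) (by omega)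
          have : -σ 1 1 - -τ 1 1 = -(σ 1 1 - τ 1 1) := by ring
          rw [this]
          exact (neg_dvd.mpr (dvd_neg.mpr hdvd))
        omega
  have h10 : σ 1 0 = τ 1 0 := by
    rw [h11] at E
    simp only [sub_self, mul_zero] at E
    have hb0 : σ 0 1 ≠ 0 := by rcases hcσ with ⟨hb, -⟩ | ⟨hb, -⟩ <;> omega
    have := (mul_eq_zero.mp E.symm).resolve_left hb0
    omega
  rw [Matrix.eta_fin_two σ, Matrix.eta_fin_two τ, h00, h01, h10, h11]

lemma injOn_f2 : Set.InjOn
    (fun σ : Matrix (Fin 2) (Fin 2) ℤ => (σ 1 0, σ 1 1, σ.det, σ 0 0 / σ 1 0))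
    (Splus ∪ Sminus) := by
  intro σ hσ τ hτ heq
  simp only [Prod.mk.injEq] at heq
  obtain ⟨h10, h11, hdet, hq⟩ := heq
  have hdσ : σ.det = σ 0 0 * σ 1 1 - σ 0 1 * σ 1 0 := by rw [Matrix.det_fin_two]
  have hdτ : τ.det = τ 0 0 * τ 1 1 - τ 0 1 * τ 1 0 := by rw [Matrix.det_fin_two]
  have hc := c_pos hσ
  have E : σ 1 1 * (σ 0 0 - τ 0 0) = σ 1 0 * (σ 0 1 - τ 0 1) := by
    have := hdet
    rw [hdσ, hdτ, ← h10, ← h11] at this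
    ring_nf; ring_nf at this; linarith
  have hepm := det_pm hσ
  by_cases h0 : σ 1 1 = 0
  · have hτ0 : τ 1 1 = 0 := by omega
    have hc1 : σ 1 0 = 1 := by
      have hdvd : σ 1 0 ∣ 1 := by
        rcases hepm with h | h
        · exact ⟨-σ 0 1, by rw [h0] at h; linarith⟩
        · exact ⟨σ 0 1, by rw [h0] at h; linarith⟩
      have := Int.le_of_dvd (by norm_num) hdvd
      omega
    have h00 : σ 0 0 = τ 0 0 := by
      rw [← h10, hc1] at hq
      simpa using hq
    have h01 : σ 0 1 = τ 0 1 := by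
      have := E
      rw [h0, h00, hc1] at this
      simp at this
      omega
    rw [Matrix.eta_fin_two σ, Matrix.eta_fin_two τ, h00, h01, h10, h11]
  · have cop : IsCoprime (σ 1 0) (σ 1 1) := by
      rcases hepm with h | h
      · exact coprime_of_eq (e := 1) (by linarith : (-(σ 0 1)) * σ 1 0 + (σ 0 0) * σ 1 1 = 1) (Or.inl rfl)
      · exact coprime_of_eq (e := -1) (by linarith : (-(σ 0 1)) * σ 1 0 + (σ 0 0) * σ 1 1 = -1) (Or.inr rfl)
    have hdvd : σ 1 0 ∣ σ 0 0 - τ 0 0 :=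
      cop.dvd_of_dvd_mul_left ⟨σ 0 1 - τ 0 1, E⟩
    have hmod : σ 0 0 % σ 1 0 = τ 0 0 % σ 1 0 := by
      have : σ 0 0 ≡ τ 0 0 [ZMOD σ 1 0] := Int.ModEq.symm ((Int.modEq_iff_dvd).mpr hdvd)
      exact this
    have h00 : σ 0 0 = τ 0 0 := by
      rw [← h10] at hq
      have e1 := Int.mul_ediv_add_emod (σ 0 0) (σ 1 0)
      have e2 := Int.mul_ediv_add_emod (τ 0 0) (σ 1 0)
      rw [← hq, ← hmod] at e2
      omega
    have h01 : σ 0 1 = τ 0 1 := by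
      rw [h00] at E
      simp only [sub_self, mul_zero] at E
      have := (mul_eq_zero.mp E.symm).resolve_left (by omega : σ 1 0 ≠ 0)
      omega
    rw [Matrix.eta_fin_two σ, Matrix.eta_fin_two τ, h00, h01, h10, h11]
set_option maxHeartbeats 1600000 in
theorem Asets_cardinality_bound :
    ∀ ε : ℝ, 0 < ε → ∀ K : ℝ, 0 < K → ∃ C : ℝ, ∀ N : ℕ, 1 ≤ N →
      ((A1set K N).ncard : ℝ) ≤ C * (N : ℝ) ^ ((3 : ℝ) / 2 + ε) ∧
      ((A2set K N).ncard : ℝ) ≤ C * (N : ℝ) ^ ((3 : ℝ) / 2 + ε) := by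
  intro ε hε K hK
  refine ⟨20*K + 14*K*(2 + Real.log (max K 1) + 1/ε), ?_⟩
  intro N hN
  have hNr : (1:ℝ) ≤ (N:ℝ) := by exact_mod_cast hN
  set Nr := (N:ℝ) with hNrdef
  have hNr0 : (0:ℝ) < Nr := by linarith
  set s := Real.sqrt Nr with hsdef
  have hs2 : s^2 = Nr := Real.sq_sqrt (by linarith)
  have hs1 : 1 ≤ s := by nlinarith [Real.sqrt_nonneg Nr]
  have hs0 : (0:ℝ) ≤ s := by linarith
  set Q : ℤ := ⌊K * Nr⌋ with hQdef
  have hQ0 : 0 ≤ Q := Int.floor_nonneg.mpr (by positivity)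
  have hQle : (Q:ℝ) ≤ K * Nr := Int.floor_le _
  set B : ℤ := ⌊2*s⌋ with hBdef
  have hB0 : 0 ≤ B := Int.floor_nonneg.mpr (by positivity)
  have hBle : (B:ℝ) ≤ 2*s := Int.floor_le _
  set D : ℤ := ⌊3*s⌋ with hDdef
  have hD0 : 0 ≤ D := Int.floor_nonneg.mpr (by positivity)
  have hDle : (D:ℝ) ≤ 3*s := Int.floor_le _
  have hQr : ((Q.toNat : ℕ) : ℝ) = (Q : ℝ) := by
    exact_mod_cast congrArg (fun z : ℤ => (z:ℝ)) (Int.toNat_of_nonneg hQ0)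
  have hNre : (1:ℝ) ≤ Nr ^ ε := Real.one_le_rpow hNr (le_of_lt hε)
  have hrpow : Nr ^ ((3:ℝ)/2 + ε) = Nr * s * Nr ^ ε := by
    rw [Real.rpow_add hNr0]
    congr 1
    rw [show (3:ℝ)/2 = 1 + 1/2 by norm_num, Real.rpow_add hNr0, Real.rpow_one,
      hsdef, Real.sqrt_eq_rpow]
  have hlog : Real.log (Q.toNat) ≤ Real.log (max K 1) + Nr ^ ε / ε := by
    have hmax1 : (1:ℝ) ≤ max K 1 := le_max_right _ _
    have h1 : Real.log (Q.toNat) ≤ Real.log (max K 1 * Nr) := by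
      rcases Nat.eq_zero_or_pos Q.toNat with h | h
      · rw [h]
        simp only [Nat.cast_zero, Real.log_zero]
        exact Real.log_nonneg (by nlinarith)
      · apply Real.log_le_log (by exact_mod_cast h)
        rw [hQr]
        calc (Q:ℝ) ≤ K * Nr := hQle
        _ ≤ max K 1 * Nr := by nlinarith [le_max_left K 1]
    rw [Real.log_mul (by positivity) (by positivity)] at h1
    have h2 : Real.log Nr ≤ Nr ^ ε / ε := Real.log_le_rpow_div (by positivity) hε
    linarith
  constructor
  · -- A1 bound
    have hsub : A1set K N ⊆ Splus ∪ Sminus := fun σ h => h.1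
    set T1 : Finset (ℤ × ℤ × ℤ × Bool) :=
      Finset.Icc 1 Q ×ˢ (Finset.Icc (-B) B ×ˢ (({-1,1} : Finset ℤ) ×ˢ (Finset.univ : Finset Bool)))
      with hT1def
    have himg : (fun σ : Matrix (Fin 2) (Fin 2) ℤ =>
        (σ 0 0, σ 0 1, σ.det, decide (σ 1 1 = 0))) '' A1set K N ⊆ ↑T1 := by
      rintro _ ⟨σ, hσ, rfl⟩
      obtain ⟨hsm, hcond, haK⟩ := hσ
      have ha1 := a_pos hsm
      have haQ : σ 0 0 ≤ Q := Int.le_floor.mpr haK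
      have hcc := col_cases hsm
      have habs : |σ 1 1| ≤ |σ 0 1| := by
        rcases hcc with ⟨h1,h2,h3⟩|⟨h1,h2,h3⟩
        · rw [abs_of_nonneg h2, abs_of_pos h1]; exact h3
        · rw [abs_of_nonpos h3, abs_of_neg h1]; omega
      have hbB : |σ 0 1| ≤ B := by
        rw [hBdef]
        apply Int.le_floor.mpr
        rw [Int.cast_abs]
        exact real_key1 (b := |((σ 0 1 : ℤ) : ℝ)|) (d := |((σ 1 1 : ℤ) : ℝ)|) hNr
          (abs_nonneg _) (by exact_mod_cast habs) hcond
      have hdet : σ.det = 1 ∨ σ.det = -1 := by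
        rcases hsm with h | h
        · exact h.1.1
        · exact h.1.1
      rw [Finset.mem_coe, hT1def]
      simp only [Finset.mem_product, Finset.mem_Icc, Finset.mem_insert,
        Finset.mem_singleton, Finset.mem_univ, and_true]
      have := abs_le.mp hbB
      exact ⟨⟨ha1, haQ⟩, ⟨this.1, this.2⟩, by rcases hdet with h|h <;> simp [h]⟩
    have hn1 : ((A1set K N).ncard : ℝ) ≤ (T1.card : ℝ) := by
      have e1 : (A1set K N).ncard = ((fun σ : Matrix (Fin 2) (Fin 2) ℤ =>
          (σ 0 0, σ 0 1, σ.det, decide (σ 1 1 = 0))) '' A1set K N).ncard :=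
        (Set.ncard_image_of_injOn (injOn_f1.mono hsub)).symm
      have e2 := Set.ncard_le_ncard himg T1.finite_toSet
      rw [Set.ncard_coe_finset] at e2
      exact_mod_cast e1 ▸ e2
    have c1 : (Finset.Icc (1:ℤ) Q).card = Q.toNat := by
      rw [Int.card_Icc]; norm_num
    have c2 : (Finset.Icc (-B) B).card = (2*B+1).toNat := by
      rw [Int.card_Icc]; congr 1; ring
    have c3 : ({-1,1} : Finset ℤ).card = 2 := by
      rw [Finset.card_insert_of_notMem (by norm_num), Finset.card_singleton]
    have c4 : (Finset.univ : Finset Bool).card = 2 := by simp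
    have hc : T1.card = Q.toNat * ((2*B+1).toNat * (2 * 2)) := by
      rw [hT1def, Finset.card_product, Finset.card_product, Finset.card_product, c1, c2, c3, c4]
    have h2B : (((2*B+1).toNat : ℕ) : ℝ) ≤ 5 * s := by
      have h' := Int.toNat_of_nonneg (show (0:ℤ) ≤ 2*B+1 by omega)
      have h'' : (((2*B+1).toNat : ℕ) : ℝ) = 2*(B:ℝ)+1 := by
        exact_mod_cast congrArg (fun z : ℤ => (z:ℝ)) h'
      rw [h'']
      nlinarith
    have hQleR : ((Q.toNat : ℕ) : ℝ) ≤ K * Nr := by rw [hQr]; exact hQle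
    have hT1card : (T1.card : ℝ) ≤ (K * Nr) * (5*s) * 4 := by
      have e : (T1.card : ℝ) = ((Q.toNat : ℕ) : ℝ) * ((((2*B+1).toNat : ℕ) : ℝ) * 4) := by
        rw [hc]; push_cast; ring
      rw [e]
      have hm := mul_le_mul hQleR h2B (Nat.cast_nonneg _)
        (mul_nonneg (le_of_lt hK) (le_of_lt hNr0))
      nlinarith [hm]
    have hC2 : (0:ℝ) ≤ 14*K*(2 + Real.log (max K 1) + 1/ε) := by
      have hlogK : (0:ℝ) ≤ Real.log (max K 1) := Real.log_nonneg (le_max_right _ _)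
      have h1ε : (0:ℝ) < 1/ε := by positivity
      have h2' : (0:ℝ) ≤ 2 + Real.log (max K 1) + 1/ε := by linarith
      have h14 : (0:ℝ) ≤ 14*K := by linarith
      exact mul_nonneg h14 h2'
    have hbase : (0:ℝ) ≤ Nr * s * Nr ^ ε := by positivity
    calc ((A1set K N).ncard : ℝ) ≤ (T1.card : ℝ) := hn1
      _ ≤ (K * Nr) * (5*s) * 4 := hT1card
      _ = 20*K * (Nr * s) := by ring
      _ ≤ 20*K * (Nr * s) * (Nr ^ ε) := le_mul_of_one_le_right
          (mul_nonneg (by linarith : (0:ℝ) ≤ 20*K) (mul_nonneg (le_of_lt hNr0) hs0)) hNre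
      _ ≤ (20*K + 14*K*(2 + Real.log (max K 1) + 1/ε)) * Nr ^ ((3:ℝ)/2 + ε) := by
          rw [hrpow]
          nlinarith [mul_nonneg hC2 hbase]
  · -- A2 bound
    have hsub : A2set K N ⊆ Splus ∪ Sminus := fun σ h => h.1
    set M : ℕ := Q.toNat with hMdef
    set T2 : Finset (ℤ × ℤ × ℤ × ℤ) :=
      (Finset.Icc 1 M).biUnion (fun n =>
        ({((n : ℕ) : ℤ)} : Finset ℤ) ×ˢ (Finset.Icc (-D) D ×ˢ
          (({-1,1} : Finset ℤ) ×ˢ Finset.Icc 0 (Q / ((n : ℕ) : ℤ))))) with hT2def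
    have himg : (fun σ : Matrix (Fin 2) (Fin 2) ℤ =>
        (σ 1 0, σ 1 1, σ.det, σ 0 0 / σ 1 0)) '' A2set K N ⊆ ↑T2 := by
      rintro _ ⟨σ, hσ, rfl⟩
      obtain ⟨hsm, hcd, haK⟩ := hσ
      have hc1 := c_pos hsm
      have ha1 := a_pos hsm
      have haQ : σ 0 0 ≤ Q := Int.le_floor.mpr haK
      have hca : σ 1 0 ≤ σ 0 0 := by
        rcases hsm with h | h
        · exact h.2.2.2.2.2.2.2.1
        · exact h.2.2.2.2.2.2.2.1
      have hcc := col_cases hsm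
      have hepm := det_pm hsm
      -- |σ 1 1| ≤ D
      have hdet' : σ 0 0 * |σ 1 1| - 1 ≤ |σ 0 1| * σ 1 0 := by
        rcases hcc with ⟨h1,h2,h3⟩ | ⟨h1,h2,h3⟩
        · rw [abs_of_nonneg h2, abs_of_pos h1]; rcases hepm with h|h <;> linarith
        · rw [abs_of_nonpos h3, abs_of_neg h1]; rcases hepm with h|h <;> nlinarith
      have hbG : |((σ 0 1 : ℤ) : ℝ)| ≤ Gphi * ((σ 0 0 : ℤ) : ℝ) := by
        rcases hcc with ⟨h1,h2,h3⟩ | ⟨h1,h2,h3⟩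
        · rw [abs_of_nonneg (by exact_mod_cast le_of_lt h1 : (0:ℝ) ≤ ((σ 0 1 : ℤ) : ℝ))]
          rcases hsm with h | h
          · exact bG_plus h.2.2.2.2.2.2.2.2 (by exact_mod_cast le_of_lt h1)
          · exfalso
            have := h.2.2.1
            omega
        · rw [abs_of_neg (by exact_mod_cast h1 : ((σ 0 1 : ℤ) : ℝ) < 0)]
          rcases hsm with h | h
          · exfalso
            have h4 := h.2.2.1
            omega
          · have hb' := h.2.2.2.2.2.2.2.2
            have : ((-σ 0 1 : ℤ) : ℝ) = -((σ 0 1 : ℤ) : ℝ) := by push_cast; ring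
            rw [this] at hb'
            exact bG_minus hb' (by exact_mod_cast (by omega : (0:ℤ) ≤ -σ 0 1))
      have hdD : |σ 1 1| ≤ D := by
        rw [hDdef]
        apply Int.le_floor.mpr
        rw [Int.cast_abs]
        refine real_key2 (a := ((σ 0 0 : ℤ) : ℝ)) (b := |((σ 0 1 : ℤ) : ℝ)|)
          (c := ((σ 1 0 : ℤ) : ℝ)) (d := |((σ 1 1 : ℤ) : ℝ)|) hNr
          (by exact_mod_cast ha1) (by exact_mod_cast hc1) (abs_nonneg _) (abs_nonneg _)
          ?_ hbG hcd
        have : ((σ 0 0 * |σ 1 1| : ℤ) : ℝ) - 1 ≤ ((|σ 0 1| * σ 1 0 : ℤ) : ℝ) := by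
          exact_mod_cast hdet'
        push_cast at this
        linarith
      have hdet : σ.det = 1 ∨ σ.det = -1 := by
        rcases hsm with h | h
        · exact h.1.1
        · exact h.1.1
      rw [Finset.mem_coe, hT2def]
      apply Finset.mem_biUnion.mpr
      refine ⟨(σ 1 0).toNat, Finset.mem_Icc.mpr ⟨by omega, by omega⟩, ?_⟩
      have hnid : (((σ 1 0).toNat : ℕ) : ℤ) = σ 1 0 := Int.toNat_of_nonneg (by omega)
      rw [hnid]
      refine Finset.mem_product.mpr ⟨Finset.mem_singleton_self _,
        Finset.mem_product.mpr ⟨Finset.mem_Icc.mpr ⟨(abs_le.mp hdD).1, (abs_le.mp hdD).2⟩,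
        Finset.mem_product.mpr ⟨by rcases hdet with h|h <;> simp [h],
        Finset.mem_Icc.mpr ⟨Int.ediv_nonneg (by omega) (by omega),
          Int.ediv_le_ediv (by omega) haQ⟩⟩⟩⟩
    have hn1 : ((A2set K N).ncard : ℝ) ≤ (T2.card : ℝ) := by
      have e1 : (A2set K N).ncard = ((fun σ : Matrix (Fin 2) (Fin 2) ℤ =>
          (σ 1 0, σ 1 1, σ.det, σ 0 0 / σ 1 0)) '' A2set K N).ncard :=
        (Set.ncard_image_of_injOn (injOn_f2.mono hsub)).symm
      have e2 := Set.ncard_le_ncard himg T2.finite_toSet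
      rw [Set.ncard_coe_finset] at e2
      exact_mod_cast e1 ▸ e2
    -- card of T2
    have c3 : ({-1,1} : Finset ℤ).card = 2 := by
      rw [Finset.card_insert_of_notMem (by norm_num), Finset.card_singleton]
    have h2D : (((2*D+1).toNat : ℕ) : ℝ) ≤ 7 * s := by
      have h' := Int.toNat_of_nonneg (show (0:ℤ) ≤ 2*D+1 by omega)
      have h'' : (((2*D+1).toNat : ℕ) : ℝ) = 2*(D:ℝ)+1 := by
        exact_mod_cast congrArg (fun z : ℤ => (z:ℝ)) h'
      rw [h'']
      nlinarith
    have hcard2 : (T2.card : ℝ) ≤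
        ∑ n ∈ Finset.Icc 1 M, (14 * s) * ((K * Nr) * ((n : ℕ) : ℝ)⁻¹ + 1) := by
      have hb := Finset.card_biUnion_le (s := Finset.Icc 1 M)
        (t := fun n => ({((n : ℕ) : ℤ)} : Finset ℤ) ×ˢ (Finset.Icc (-D) D ×ˢ
          (({-1,1} : Finset ℤ) ×ˢ Finset.Icc 0 (Q / ((n : ℕ) : ℤ)))))
      rw [hT2def]
      calc ((((Finset.Icc 1 M).biUnion _).card : ℕ) : ℝ)
          ≤ ((∑ n ∈ Finset.Icc 1 M, (({((n : ℕ) : ℤ)} : Finset ℤ) ×ˢ (Finset.Icc (-D) D ×ˢ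
            (({-1,1} : Finset ℤ) ×ˢ Finset.Icc 0 (Q / ((n : ℕ) : ℤ))))).card : ℕ) : ℝ) := by
            exact_mod_cast hb
        _ = ∑ n ∈ Finset.Icc 1 M, (((({((n : ℕ) : ℤ)} : Finset ℤ) ×ˢ (Finset.Icc (-D) D ×ˢ
            (({-1,1} : Finset ℤ) ×ˢ Finset.Icc 0 (Q / ((n : ℕ) : ℤ))))).card : ℕ) : ℝ) := by
            push_cast; ring
        _ ≤ ∑ n ∈ Finset.Icc 1 M, (14 * s) * ((K * Nr) * ((n : ℕ) : ℝ)⁻¹ + 1) := by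
            apply Finset.sum_le_sum
            intro n hn
            have hn1 : 1 ≤ n := (Finset.mem_Icc.mp hn).1
            have hnZ : (1:ℤ) ≤ ((n : ℕ) : ℤ) := by exact_mod_cast hn1
            have hnR : (1:ℝ) ≤ ((n : ℕ) : ℝ) := by exact_mod_cast hn1
            have hnR0 : (0:ℝ) < ((n : ℕ) : ℝ) := by linarith
            have hcardeq : ((({((n : ℕ) : ℤ)} : Finset ℤ) ×ˢ (Finset.Icc (-D) D ×ˢ
                (({-1,1} : Finset ℤ) ×ˢ Finset.Icc 0 (Q / ((n : ℕ) : ℤ))))).card : ℕ)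
                = (2*D+1).toNat * (2 * (Q / ((n : ℕ) : ℤ) + 1).toNat) := by
              rw [Finset.card_product, Finset.card_product, Finset.card_product,
                Finset.card_singleton, c3, Int.card_Icc, Int.card_Icc]
              have e1 : (D + 1 - -D) = 2*D+1 := by ring
              have e2 : (Q / ((n : ℕ) : ℤ) + 1 - 0) = Q / ((n : ℕ) : ℤ) + 1 := by ring
              rw [e1, e2]
              ring
            rw [hcardeq]
            have hq0 : (0:ℤ) ≤ Q / ((n : ℕ) : ℤ) := Int.ediv_nonneg hQ0 (by omega)
            have hqr : (((Q / ((n : ℕ) : ℤ) + 1).toNat : ℕ) : ℝ)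
                = ((Q / ((n : ℕ) : ℤ) : ℤ) : ℝ) + 1 := by
              have h' := Int.toNat_of_nonneg (show (0:ℤ) ≤ Q / ((n : ℕ) : ℤ) + 1 by omega)
              exact_mod_cast congrArg (fun z : ℤ => (z:ℝ)) h'
            have hqle : ((Q / ((n : ℕ) : ℤ) : ℤ) : ℝ) ≤ (K * Nr) * ((n : ℕ) : ℝ)⁻¹ := by
              have hcast : ((((n : ℕ) : ℤ) : ℤ) : ℝ) = ((n : ℕ) : ℝ) := by push_cast; ring
              calc ((Q / ((n : ℕ) : ℤ) : ℤ) : ℝ) ≤ (Q : ℝ) / (((n : ℕ) : ℤ) : ℝ) :=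
                    int_ediv_cast_le (by omega)
                _ = (Q : ℝ) / ((n : ℕ) : ℝ) := by rw [hcast]
                _ ≤ (K * Nr) / ((n : ℕ) : ℝ) := by gcongr
                _ = (K * Nr) * ((n : ℕ) : ℝ)⁻¹ := by rw [div_eq_mul_inv]
            push_cast
            rw [show ((((Q / ((n : ℕ) : ℤ) + 1).toNat : ℕ) : ℝ)) = ((Q / ((n : ℕ) : ℤ) : ℤ) : ℝ) + 1 from hqr]
            have hf1 : (((2*D+1).toNat : ℕ) : ℝ) ≤ 7 * s := h2D
            have hf2 : ((Q / ((n : ℕ) : ℤ) : ℤ) : ℝ) + 1 ≤ (K * Nr) * ((n : ℕ) : ℝ)⁻¹ + 1 := by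
              linarith
            have hmul := mul_le_mul hf1 (by linarith : 2 * (((Q / ((n : ℕ) : ℤ) : ℤ) : ℝ) + 1) ≤ 2 * ((K * Nr) * ((n : ℕ) : ℝ)⁻¹ + 1))
              (by positivity) (by linarith [hs1])
            calc (((2*D+1).toNat : ℕ) : ℝ) * (2 * ((((Q / ((n : ℕ) : ℤ)) : ℤ) : ℝ) + 1))
                ≤ (7*s) * (2 * ((K * Nr) * ((n : ℕ) : ℝ)⁻¹ + 1)) := hmul
              _ = (14 * s) * ((K * Nr) * ((n : ℕ) : ℝ)⁻¹ + 1) := by ring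
    -- sum evaluation and final bound
    have hharm : ∑ n ∈ Finset.Icc 1 M, ((n : ℕ) : ℝ)⁻¹ = ((harmonic M : ℚ) : ℝ) := by
      rw [harmonic_eq_sum_Icc]
      push_cast
      rfl
    have hsum : ∑ n ∈ Finset.Icc 1 M, (14 * s) * ((K * Nr) * ((n : ℕ) : ℝ)⁻¹ + 1)
        = (14 * s) * ((K * Nr) * ((harmonic M : ℚ) : ℝ) + (M : ℝ)) := by
      rw [← Finset.mul_sum]
      congr 1
      rw [Finset.sum_add_distrib, ← Finset.mul_sum, hharm, Finset.sum_const, Nat.card_Icc]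
      simp
    have hKN0 : (0:ℝ) ≤ K * Nr := le_of_lt (mul_pos hK hNr0)
    have hM_le : (M : ℝ) ≤ K * Nr := by
      rw [hMdef, hQr]; exact hQle
    have hharm_le : ((harmonic M : ℚ) : ℝ) ≤ 1 + Real.log (max K 1) + Nr ^ ε / ε := by
      have h1 := harmonic_le_one_add_log M
      have h2 : Real.log (M : ℝ) ≤ Real.log (max K 1) + Nr ^ ε / ε := hlog
      linarith
    have hL0 : (0:ℝ) ≤ Real.log (max K 1) := Real.log_nonneg (le_max_right _ _)
    have hmid : (14 * s) * ((K * Nr) * ((harmonic M : ℚ) : ℝ) + (M : ℝ))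
        ≤ 14*K*(Nr*s) * (2 + Real.log (max K 1) + Nr ^ ε / ε) := by
      have hyp : (K * Nr) * ((harmonic M : ℚ) : ℝ)
          ≤ (K * Nr) * (1 + Real.log (max K 1) + Nr ^ ε / ε) :=
        mul_le_mul_of_nonneg_left hharm_le hKN0
      have hs14 : (0:ℝ) ≤ 14 * s := by linarith
      have : (K * Nr) * ((harmonic M : ℚ) : ℝ) + (M : ℝ)
          ≤ (K * Nr) * (2 + Real.log (max K 1) + Nr ^ ε / ε) := by nlinarith
      nlinarith [mul_le_mul_of_nonneg_left this hs14]
    have hP1 : 2 + Real.log (max K 1) + Nr ^ ε / ε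
        ≤ (2 + Real.log (max K 1) + 1/ε) * Nr ^ ε := by
      have h1 : 2 + Real.log (max K 1) ≤ (2 + Real.log (max K 1)) * Nr ^ ε :=
        le_mul_of_one_le_right (by linarith) hNre
      have h2 : Nr ^ ε / ε = (1/ε) * Nr ^ ε := by ring
      nlinarith
    have hfin : 14*K*(Nr*s) * (2 + Real.log (max K 1) + Nr ^ ε / ε)
        ≤ (20*K + 14*K*(2 + Real.log (max K 1) + 1/ε)) * Nr ^ ((3:ℝ)/2 + ε) := by
      rw [hrpow]
      have h0 : (0:ℝ) ≤ 14*K*(Nr*s) :=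
        mul_nonneg (by linarith) (mul_nonneg (le_of_lt hNr0) hs0)
      have h1 := mul_le_mul_of_nonneg_left hP1 h0
      have h2 : (0:ℝ) ≤ 20*K * (Nr * s * Nr ^ ε) := by
        apply mul_nonneg (by linarith)
        exact mul_nonneg (mul_nonneg (le_of_lt hNr0) hs0) (by linarith)
      nlinarith
    calc ((A2set K N).ncard : ℝ) ≤ (T2.card : ℝ) := hn1
      _ ≤ ∑ n ∈ Finset.Icc 1 M, (14 * s) * ((K * Nr) * ((n : ℕ) : ℝ)⁻¹ + 1) := hcard2
      _ = (14 * s) * ((K * Nr) * ((harmonic M : ℚ) : ℝ) + (M : ℝ)) := hsum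
      _ ≤ 14*K*(Nr*s) * (2 + Real.log (max K 1) + Nr ^ ε / ε) := hmid
      _ ≤ (20*K + 14*K*(2 + Real.log (max K 1) + 1/ε)) * Nr ^ ((3:ℝ)/2 + ε) := hfin
end
end

section
/- For e = ±1, α ≥ 1, and β ≥ g (with the additional requirement β ≥ G+1 when e = −1), the map Φ_e sending σ = [[a, e·b],[c, e·d]] ∈ S̃_e(α,β;N) to the triple (b, a, d) is an injection into A₁(e,α,β;N) ∪ A₂(e,α,β;N) ∪ A₃(e,α,β;N), and one has #S̃_e(α,β;N) = #A₁(e,α,β;N) + #A₂(e,α,β;N) + #A₃(e,α,β;N) + O(N), i.e. the difference between the two sides is bounded in absolute value by an absolute constant times N. -/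
noncomputable section

/-- `S̃₊₁(α,β;N)`. -/
def StildePlus (α β : ℝ) (N : ℕ) : Set (Matrix (Fin 2) (Fin 2) ℤ) :=
  {σ | σ ∈ Splus ∧ σ.trace ≤ (N : ℤ) ∧ α * (σ 1 1 : ℝ) ≤ (σ 0 1 : ℝ) ∧
    β * (σ 0 1 : ℝ) ≤ (σ 0 0 : ℝ) ∧ σ.det = 1}

/-- `S̃₋₁(α,β;N)` (here `b = −σ 0 1`, `d = −σ 1 1`). -/
def StildeMinus (α β : ℝ) (N : ℕ) : Set (Matrix (Fin 2) (Fin 2) ℤ) :=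
  {σ | σ ∈ Sminus ∧ σ.trace ≤ (N : ℤ) ∧ α * ((-σ 1 1 : ℤ) : ℝ) ≤ ((-σ 0 1 : ℤ) : ℝ) ∧
    β * ((-σ 0 1 : ℤ) : ℝ) ≤ (σ 0 0 : ℝ) ∧ σ.det = 1}

/-- `A₁(e,α,β;N)`: triples `(z,x,y)`. -/
def Aset1 (e : ℤ) (α β : ℝ) (N : ℕ) : Set (ℤ × ℤ × ℤ) :=
  {t | 0 ≤ t.1 ∧ 0 ≤ t.2.1 ∧ 0 ≤ t.2.2 ∧
    (t.2.2 : ℝ) * α ≤ (t.1 : ℝ) ∧ (t.1 : ℝ) * β ≤ (t.2.1 : ℝ) ∧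
    gphi * (t.1 : ℝ) < (t.2.1 : ℝ) ∧ t.2.1 + e * t.2.2 ≤ (N : ℤ) ∧
    t.2.1 * t.2.2 ≡ e [ZMOD (2 * t.1)] ∧ Even t.1 ∧ 2 ≤ t.1}

/-- `A₂(e,α,β;N)`. -/
def Aset2 (e : ℤ) (α β : ℝ) (N : ℕ) : Set (ℤ × ℤ × ℤ) :=
  {t | 0 ≤ t.1 ∧ 0 ≤ t.2.1 ∧ 0 ≤ t.2.2 ∧
    (t.2.2 : ℝ) * α ≤ (t.1 : ℝ) ∧ (t.1 : ℝ) * β ≤ (t.2.1 : ℝ) ∧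
    gphi * (t.1 : ℝ) < (t.2.1 : ℝ) ∧ t.2.1 + e * t.2.2 ≤ (N : ℤ) ∧
    t.2.1 * t.2.2 ≡ e [ZMOD t.1] ∧ Odd t.1 ∧ Odd t.2.2 ∧ Even t.2.1}

/-- `A₃(e,α,β;N)`. -/
def Aset3 (e : ℤ) (α β : ℝ) (N : ℕ) : Set (ℤ × ℤ × ℤ) :=
  {t | 0 ≤ t.1 ∧ 0 ≤ t.2.1 ∧ 0 ≤ t.2.2 ∧
    (t.2.2 : ℝ) * α ≤ (t.1 : ℝ) ∧ (t.1 : ℝ) * β ≤ (t.2.1 : ℝ) ∧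
    gphi * (t.1 : ℝ) < (t.2.1 : ℝ) ∧ t.2.1 + e * t.2.2 ≤ (N : ℤ) ∧
    t.2.1 * t.2.2 ≡ e [ZMOD t.1] ∧ Odd t.2.1 ∧ Odd t.1 ∧ Even t.2.2}

/-- `S̃_e(α,β;N)` for `e = ±1`. -/
def StildeE (e : ℤ) (α β : ℝ) (N : ℕ) : Set (Matrix (Fin 2) (Fin 2) ℤ) :=
  if e = 1 then StildePlus α β N else StildeMinus α β N

namespace ParamAux

lemma sqrt5_gt_two : (2:ℝ) < Real.sqrt 5 := by
  rw [show (2:ℝ) = Real.sqrt 4 by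
    rw [show (4:ℝ) = 2^2 by norm_num, Real.sqrt_sq (by norm_num)]]
  exact Real.sqrt_lt_sqrt (by norm_num) (by norm_num)

lemma sqrt5_lt_three : Real.sqrt 5 < 3 := by
  rw [show (3:ℝ) = Real.sqrt 9 by
    rw [show (9:ℝ) = 3^2 by norm_num, Real.sqrt_sq (by norm_num)]]
  exact Real.sqrt_lt_sqrt (by norm_num) (by norm_num)

lemma gphi_pos : 0 < gphi := by
  have := sqrt5_gt_two; unfold gphi; linarith

lemma gphi_lt_one : gphi < 1 := by
  have := sqrt5_lt_three; unfold gphi; linarith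

lemma one_lt_two_mul_gphi : 1 < 2 * gphi := by
  have := sqrt5_gt_two; unfold gphi; linarith

lemma two_le_Gphi_add_one : 2 ≤ Gphi + 1 := by
  have := sqrt5_gt_two; unfold Gphi; linarith

lemma gphi_le_Gphi_add_one : gphi ≤ Gphi + 1 := by
  have h1 := gphi_lt_one; have h2 := two_le_Gphi_add_one; linarith

lemma irrational_sqrt5 : Irrational (Real.sqrt 5) := by
  exact_mod_cast (Nat.prime_five).irrational_sqrt

lemma strict_G {a b : ℤ} {β : ℝ} (hb : 1 ≤ b) (hβ : Gphi + 1 ≤ β)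
    (h : β * (b:ℝ) ≤ (a:ℝ)) : (Gphi + 1) * (b:ℝ) < (a:ℝ) := by
  have hb0 : (0:ℝ) < (b:ℝ) := by exact_mod_cast hb
  have hle : (Gphi + 1) * (b:ℝ) ≤ (a:ℝ) :=
    le_trans (mul_le_mul_of_nonneg_right hβ hb0.le) h
  rcases lt_or_eq_of_le hle with h' | h'
  · exact h'
  · exfalso
    have : Real.sqrt 5 = ((2*a - 3*b : ℤ):ℝ) / ((b:ℤ):ℝ) := by
      unfold Gphi at h'
      push_cast
      field_simp
      nlinarith [h']
    exact irrational_sqrt5 ⟨(((2*a - 3*b : ℤ):ℚ) / ((b:ℤ):ℚ)), by push_cast [this]; ring⟩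

/-- Uniform description of membership in `S̃ₑ` via `(a,b,c,d)` with
`σ = [[a, e·b],[c, e·d]]`. -/
def SCond (e : ℤ) (α β : ℝ) (N : ℕ) (a b c d : ℤ) : Prop :=
  a * d - b * c = e ∧
  ((a % 2 = 1 ∧ b % 2 = 0 ∧ c % 2 = 0 ∧ d % 2 = 1) ∨
   (a % 2 = 0 ∧ b % 2 = 1 ∧ c % 2 = 1 ∧ d % 2 = 1) ∨
   (a % 2 = 1 ∧ b % 2 = 1 ∧ c % 2 = 1 ∧ d % 2 = 0)) ∧
  0 ≤ a ∧ 0 ≤ b ∧ 0 ≤ c ∧ 0 ≤ d ∧ d ≤ b ∧ 1 ≤ c ∧ c ≤ a ∧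
  (e = 1 → gphi * (b:ℝ) < (a:ℝ)) ∧ (e = -1 → (Gphi + 1) * (b:ℝ) < (a:ℝ)) ∧
  a + e * d ≤ (N:ℤ) ∧ α * (d:ℝ) ≤ (b:ℝ) ∧ β * (b:ℝ) ≤ (a:ℝ)

lemma SCond.b_pos {e : ℤ} {α β : ℝ} {N : ℕ} {a b c d : ℤ}
    (he : e = 1 ∨ e = -1) (h : SCond e α β N a b c d) : 1 ≤ b := by
  obtain ⟨hdet, -, -, hb, -, hd, hdb, -⟩ := h
  rcases lt_or_ge 0 b with h' | h'
  · omega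
  · exfalso
    have hb0 : b = 0 := le_antisymm h' hb
    have hd0 : d = 0 := le_antisymm (hb0 ▸ hdb) hd
    rw [hb0, hd0] at hdet
    rcases he with rfl | rfl <;> omega

lemma mod2eq_one_iff (σ : Matrix (Fin 2) (Fin 2) ℤ) :
    Mod2Eq σ 1 ↔ σ 0 0 % 2 = 1 ∧ σ 0 1 % 2 = 0 ∧ σ 1 0 % 2 = 0 ∧ σ 1 1 % 2 = 1 := by
  constructor
  · intro h
    have h00 := h 0 0; have h01 := h 0 1; have h10 := h 1 0; have h11 := h 1 1
    simp [Matrix.one_apply] at h00 h01 h10 h11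
    refine ⟨?_, ?_, ?_, ?_⟩ <;> omega
  · rintro ⟨h1, h2, h3, h4⟩ i j
    fin_cases i <;> fin_cases j <;> simp [Matrix.one_apply, h1, h2, h3, h4]

lemma mod2eq_A_iff (σ : Matrix (Fin 2) (Fin 2) ℤ) :
    Mod2Eq σ !![0, 1; 1, 1] ↔
      σ 0 0 % 2 = 0 ∧ σ 0 1 % 2 = 1 ∧ σ 1 0 % 2 = 1 ∧ σ 1 1 % 2 = 1 := by
  constructor
  · intro h
    have h00 := h 0 0; have h01 := h 0 1; have h10 := h 1 0; have h11 := h 1 1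
    simp at h00 h01 h10 h11
    refine ⟨?_, ?_, ?_, ?_⟩ <;> omega
  · rintro ⟨h1, h2, h3, h4⟩ i j
    fin_cases i <;> fin_cases j <;> simp [h1, h2, h3, h4]

lemma mod2eq_B_iff (σ : Matrix (Fin 2) (Fin 2) ℤ) :
    Mod2Eq σ !![1, 1; 1, 0] ↔
      σ 0 0 % 2 = 1 ∧ σ 0 1 % 2 = 1 ∧ σ 1 0 % 2 = 1 ∧ σ 1 1 % 2 = 0 := by
  constructor
  · intro h
    have h00 := h 0 0; have h01 := h 0 1; have h10 := h 1 0; have h11 := h 1 1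
    simp at h00 h01 h10 h11
    refine ⟨?_, ?_, ?_, ?_⟩ <;> omega
  · rintro ⟨h1, h2, h3, h4⟩ i j
    fin_cases i <;> fin_cases j <;> simp [h1, h2, h3, h4]

lemma mem_StildeE_iff {e : ℤ} (he : e = 1 ∨ e = -1) {α β : ℝ} {N : ℕ}
    (σ : Matrix (Fin 2) (Fin 2) ℤ) :
    σ ∈ StildeE e α β N ↔
      SCond e α β N (σ 0 0) (e * σ 0 1) (σ 1 0) (e * σ 1 1) := by
  rcases he with rfl | rfl
  · rw [show StildeE 1 α β N = StildePlus α β N from if_pos rfl]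
    simp only [one_mul]
    constructor
    · rintro ⟨⟨⟨-, hmod⟩, h0a, h0b, h0c, h0d, hdb, h1c, hca, hg⟩, htr, hα', hβ', hdet⟩
      rw [Matrix.det_fin_two] at hdet
      rw [Matrix.trace_fin_two] at htr
      refine ⟨hdet, ?_, h0a, h0b, h0c, h0d, hdb, h1c, hca,
        fun _ => hg, fun h => absurd h (by norm_num), by omega, hα', hβ'⟩
      rcases hmod with h | h | h
      · exact Or.inl ((mod2eq_one_iff σ).mp h)
      · exact Or.inr (Or.inl ((mod2eq_A_iff σ).mp h))
      · exact Or.inr (Or.inr ((mod2eq_B_iff σ).mp h))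
    · rintro ⟨hdet, hmod, h0a, h0b, h0c, h0d, hdb, h1c, hca, hg, -, htr, hα', hβ'⟩
      refine ⟨⟨⟨Or.inl ?_, ?_⟩, h0a, h0b, h0c, h0d, hdb, h1c, hca, hg rfl⟩, ?_, hα', hβ', ?_⟩
      · rw [Matrix.det_fin_two]; exact hdet
      · rcases hmod with h | h | h
        · exact Or.inl ((mod2eq_one_iff σ).mpr h)
        · exact Or.inr (Or.inl ((mod2eq_A_iff σ).mpr h))
        · exact Or.inr (Or.inr ((mod2eq_B_iff σ).mpr h))
      · rw [Matrix.trace_fin_two]; omega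
      · rw [Matrix.det_fin_two]; exact hdet
  · rw [show StildeE (-1) α β N = StildeMinus α β N from if_neg (by norm_num)]
    simp only [neg_one_mul]
    constructor
    · rintro ⟨⟨⟨-, hmod⟩, h0a, h0b, h0c, h0d, hdb, h1c, hca, hg⟩, htr, hα', hβ', hdet⟩
      rw [Matrix.det_fin_two] at hdet
      rw [Matrix.trace_fin_two] at htr
      refine ⟨by linear_combination -hdet, ?_, h0a, h0b, h0c, h0d, hdb, h1c, hca,
        fun h => absurd h (by norm_num), fun _ => hg, by omega, hα', hβ'⟩
      rcases hmod with h | h | h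
      · obtain ⟨ha, hb, hc, hd⟩ := (mod2eq_one_iff σ).mp h
        exact Or.inl ⟨ha, by omega, hc, by omega⟩
      · obtain ⟨ha, hb, hc, hd⟩ := (mod2eq_A_iff σ).mp h
        exact Or.inr (Or.inl ⟨ha, by omega, hc, by omega⟩)
      · obtain ⟨ha, hb, hc, hd⟩ := (mod2eq_B_iff σ).mp h
        exact Or.inr (Or.inr ⟨ha, by omega, hc, by omega⟩)
    · rintro ⟨hdet, hmod, h0a, h0b, h0c, h0d, hdb, h1c, hca, -, hg, htr, hα', hβ'⟩
      refine ⟨⟨⟨Or.inl ?_, ?_⟩, h0a, h0b, h0c, h0d, hdb, h1c, hca, hg rfl⟩, ?_, hα', hβ', ?_⟩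
      · rw [Matrix.det_fin_two]; linear_combination -hdet
      · rcases hmod with ⟨ha, hb, hc, hd⟩ | ⟨ha, hb, hc, hd⟩ | ⟨ha, hb, hc, hd⟩
        · exact Or.inl ((mod2eq_one_iff σ).mpr ⟨ha, by omega, hc, by omega⟩)
        · exact Or.inr (Or.inl ((mod2eq_A_iff σ).mpr ⟨ha, by omega, hc, by omega⟩))
        · exact Or.inr (Or.inr ((mod2eq_B_iff σ).mpr ⟨ha, by omega, hc, by omega⟩))
      · rw [Matrix.trace_fin_two]; omega
      · rw [Matrix.det_fin_two]; linear_combination -hdet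

lemma injOn_aux {e : ℤ} (he : e = 1 ∨ e = -1) {α β : ℝ} {N : ℕ} :
    Set.InjOn (fun σ : Matrix (Fin 2) (Fin 2) ℤ => (e * σ 0 1, σ 0 0, e * σ 1 1))
      (StildeE e α β N) := by
  intro σ hσ τ hτ hst
  rw [mem_StildeE_iff he] at hσ hτ
  have he0 : e ≠ 0 := by rcases he with rfl | rfl <;> norm_num
  simp only [Prod.mk.injEq] at hst
  obtain ⟨h1, h2, h3⟩ := hst
  have e01 : σ 0 1 = τ 0 1 := mul_left_cancel₀ he0 h1
  have e11 : σ 1 1 = τ 1 1 := mul_left_cancel₀ he0 h3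
  have hb1 : 1 ≤ e * τ 0 1 := SCond.b_pos (Or.imp id id (by tauto)) hτ
  have hdet1 := hσ.1
  have hdet2 := hτ.1
  rw [h2, e01, e11] at hdet1
  have e10 : σ 1 0 = τ 1 0 := by
    have hcancel : (e * τ 0 1) * σ 1 0 = (e * τ 0 1) * τ 1 0 := by
      linear_combination hdet2 - hdet1
    exact mul_left_cancel₀ (by omega) hcancel
  ext i j
  fin_cases i <;> fin_cases j
  · exact h2
  · exact e01
  · exact e10
  · exact e11

lemma mapsTo_aux {e : ℤ} (he : e = 1 ∨ e = -1) {α β : ℝ} {N : ℕ} :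
    Set.MapsTo (fun σ : Matrix (Fin 2) (Fin 2) ℤ => (e * σ 0 1, σ 0 0, e * σ 1 1))
      (StildeE e α β N) (Aset1 e α β N ∪ Aset2 e α β N ∪ Aset3 e α β N) := by
  intro σ hσ
  rw [mem_StildeE_iff he] at hσ
  have hb1 : 1 ≤ e * σ 0 1 := SCond.b_pos he hσ
  set a := σ 0 0 with ha
  set b := e * σ 0 1 with hb
  set c := σ 1 0 with hcdef
  set d := e * σ 1 1 with hd
  obtain ⟨hdet, hmod, h0a, h0b, h0c, h0d, hdb, h1c, hca, hg1, hg2, htr, hα', hβ'⟩ := hσ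
  have hgb : gphi * (b:ℝ) < (a:ℝ) := by
    rcases he with rfl | rfl
    · exact hg1 rfl
    · exact lt_of_le_of_lt
        (mul_le_mul_of_nonneg_right gphi_le_Gphi_add_one (by exact_mod_cast h0b)) (hg2 rfl)
  have hal : (d:ℝ) * α ≤ (b:ℝ) := by rw [mul_comm]; exact hα'
  have hbe : (b:ℝ) * β ≤ (a:ℝ) := by rw [mul_comm]; exact hβ'
  show (b, a, d) ∈ _
  simp only [Set.mem_union, Aset1, Aset2, Aset3, Set.mem_setOf_eq]
  rcases hmod with ⟨ha2, hb2, hc2, hd2⟩ | ⟨ha2, hb2, hc2, hd2⟩ | ⟨ha2, hb2, hc2, hd2⟩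
  · refine Or.inl (Or.inl ⟨h0b, h0a, h0d, hal, hbe, hgb, htr, ?_, Int.even_iff.mpr hb2, by omega⟩)
    rw [Int.modEq_iff_dvd]
    obtain ⟨k, hk⟩ : (2:ℤ) ∣ c := ⟨c / 2, by omega⟩
    exact ⟨-k, by linear_combination -hdet - b * hk⟩
  · refine Or.inl (Or.inr ⟨h0b, h0a, h0d, hal, hbe, hgb, htr, ?_, Int.odd_iff.mpr hb2,
      Int.odd_iff.mpr hd2, Int.even_iff.mpr ha2⟩)
    rw [Int.modEq_iff_dvd]
    exact ⟨-c, by linear_combination -hdet⟩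
  · refine Or.inr ⟨h0b, h0a, h0d, hal, hbe, hgb, htr, ?_, Int.odd_iff.mpr ha2,
      Int.odd_iff.mpr hb2, Int.even_iff.mpr hd2⟩
    rw [Int.modEq_iff_dvd]
    exact ⟨-c, by linear_combination -hdet⟩

lemma build {e : ℤ} (he : e = 1 ∨ e = -1) {α β : ℝ} {N : ℕ} {z x y c : ℤ}
    (h : SCond e α β N x z c y) :
    (z, x, y) ∈ (fun σ : Matrix (Fin 2) (Fin 2) ℤ => (e * σ 0 1, σ 0 0, e * σ 1 1)) ''
      (StildeE e α β N) := by
  have hee : ∀ w : ℤ, e * (e * w) = w := by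
    intro w; rcases he with rfl | rfl <;> ring
  refine ⟨!![x, e * z; c, e * y], ?_, ?_⟩
  · rw [mem_StildeE_iff he]
    have e00 : (!![x, e * z; c, e * y]) 0 0 = x := by simp
    have e01 : (!![x, e * z; c, e * y]) 0 1 = e * z := by simp
    have e10 : (!![x, e * z; c, e * y]) 1 0 = c := by simp
    have e11 : (!![x, e * z; c, e * y]) 1 1 = e * y := by simp
    rw [e00, e01, e10, e11, hee, hee]
    exact h
  · have e00 : (!![x, e * z; c, e * y]) 0 0 = x := by simp
    have e01 : (!![x, e * z; c, e * y]) 0 1 = e * z := by simp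
    have e11 : (!![x, e * z; c, e * y]) 1 1 = e * y := by simp
    simp only [e00, e01, e11, hee]

/-- Exceptional triples. -/
def Mset (e : ℤ) (N : ℕ) : Set (ℤ × ℤ × ℤ) :=
  if e = 1 then (fun x : ℤ => ((1:ℤ), x, (0:ℤ))) '' Set.Icc 1 (N:ℤ)
  else (fun x : ℤ => ((1:ℤ), x, (1:ℤ))) '' Set.Icc 2 ((N:ℤ) + 1)

lemma Mset_finite (e : ℤ) (N : ℕ) : (Mset e N).Finite := by
  unfold Mset; split <;> exact (Set.finite_Icc _ _).image _

lemma Mset_ncard (e : ℤ) (N : ℕ) : (Mset e N).ncard ≤ N := by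
  unfold Mset; split
  · refine le_trans (Set.ncard_image_le (Set.finite_Icc _ _)) ?_
    rw [← Finset.coe_Icc, Set.ncard_coe_finset, Int.card_Icc]
    omega
  · refine le_trans (Set.ncard_image_le (Set.finite_Icc _ _)) ?_
    rw [← Finset.coe_Icc, Set.ncard_coe_finset, Int.card_Icc]
    omega

lemma cover_aux {e : ℤ} (he : e = 1 ∨ e = -1) {α β : ℝ} {N : ℕ}
    (hα : 1 ≤ α) (hβ : gphi ≤ β) (hβ' : e = -1 → Gphi + 1 ≤ β) :
    ∀ t ∈ Aset1 e α β N ∪ Aset2 e α β N ∪ Aset3 e α β N,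
      t ∈ Mset e N ∨
        t ∈ (fun σ : Matrix (Fin 2) (Fin 2) ℤ => (e * σ 0 1, σ 0 0, e * σ 1 1)) ''
          (StildeE e α β N) := by
  have hg0 := gphi_pos
  rintro ⟨z, x, y⟩ ht
  simp only [Set.mem_union, Aset1, Aset2, Aset3, Set.mem_setOf_eq] at ht
  obtain ⟨h0z, h0x, h0y, hαf, hβf, hgf, htr, hrest⟩ :
      0 ≤ z ∧ 0 ≤ x ∧ 0 ≤ y ∧ (y:ℝ) * α ≤ (z:ℝ) ∧ (z:ℝ) * β ≤ (x:ℝ) ∧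
        gphi * (z:ℝ) < (x:ℝ) ∧ x + e * y ≤ (N:ℤ) ∧
        ((x * y ≡ e [ZMOD 2 * z] ∧ Even z ∧ 2 ≤ z) ∨
         (x * y ≡ e [ZMOD z] ∧ Odd z ∧ Odd y ∧ Even x) ∨
         (x * y ≡ e [ZMOD z] ∧ Odd x ∧ Odd z ∧ Even y)) := by
    rcases ht with (⟨a1,a2,a3,a4,a5,a6,a7,a8,a9,a10⟩ | ⟨a1,a2,a3,a4,a5,a6,a7,a8,a9,a10,a11⟩) |
      ⟨a1,a2,a3,a4,a5,a6,a7,a8,a9,a10,a11⟩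
    · exact ⟨a1,a2,a3,a4,a5,a6,a7, Or.inl ⟨a8,a9,a10⟩⟩
    · exact ⟨a1,a2,a3,a4,a5,a6,a7, Or.inr (Or.inl ⟨a8,a9,a10,a11⟩)⟩
    · exact ⟨a1,a2,a3,a4,a5,a6,a7, Or.inr (Or.inr ⟨a8,a9,a10,a11⟩)⟩
  have hx1 : 1 ≤ x := by
    have h1 : (0:ℝ) ≤ gphi * (z:ℝ) := mul_nonneg hg0.le (by exact_mod_cast h0z)
    have h2 : (0:ℝ) < (x:ℝ) := lt_of_le_of_lt h1 hgf
    have : (0:ℤ) < x := by exact_mod_cast h2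
    omega
  have hz1 : 1 ≤ z := by
    rcases hrest with ⟨-, -, h⟩ | ⟨-, h, -⟩ | ⟨-, -, h, -⟩
    · omega
    · rcases h with ⟨k, hk⟩; omega
    · rcases h with ⟨k, hk⟩; omega
  have hyz : y ≤ z := by
    have h1 : (y:ℝ) * 1 ≤ (y:ℝ) * α := mul_le_mul_of_nonneg_left hα (by exact_mod_cast h0y)
    rw [mul_one] at h1
    have : (y:ℝ) ≤ (z:ℝ) := le_trans h1 hαf
    exact_mod_cast this
  have hdvd : z ∣ x * y - e := by
    rcases hrest with ⟨h, -⟩ | ⟨h, -⟩ | ⟨h, -⟩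
    · obtain ⟨k, hk⟩ := Int.ModEq.dvd h
      exact ⟨-(2*k), by linarith⟩
    · obtain ⟨k, hk⟩ := Int.ModEq.dvd h
      exact ⟨-k, by linarith⟩
    · obtain ⟨k, hk⟩ := Int.ModEq.dvd h
      exact ⟨-k, by linarith⟩
  obtain ⟨c, hc⟩ := hdvd
  have he_odd : Odd e := by rcases he with rfl | rfl <;> decide
  have hpar : (x % 2 = 1 ∧ z % 2 = 0 ∧ c % 2 = 0 ∧ y % 2 = 1) ∨
      (x % 2 = 0 ∧ z % 2 = 1 ∧ c % 2 = 1 ∧ y % 2 = 1) ∨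
      (x % 2 = 1 ∧ z % 2 = 1 ∧ c % 2 = 1 ∧ y % 2 = 0) := by
    rcases hrest with ⟨h, hev, -⟩ | ⟨-, hoz, hoy, hex⟩ | ⟨-, hox, hoz, hey⟩
    · left
      obtain ⟨k, hk⟩ := Int.ModEq.dvd h
      have hceq : c = -(2*k) := by
        have h2 : z * c = z * (-(2*k)) := by linarith
        exact mul_left_cancel₀ (by omega) h2
      have hzc : Even (z * c) := hev.mul_right c
      have hxy : Odd (x * y) := by
        have h3 : x * y = z * c + e := by linarith
        rw [h3]
        exact hzc.add_odd he_odd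
      obtain ⟨hox, hoy⟩ := (Int.odd_mul).mp hxy
      exact ⟨Int.odd_iff.mp hox, Int.even_iff.mp hev, by omega, Int.odd_iff.mp hoy⟩
    · right; left
      have hzc : Odd (z * c) := by
        have h1 : Even (x * y) := hex.mul_right y
        have h3 : z * c = x * y - e := by linarith
        rw [h3]
        exact h1.sub_odd he_odd
      exact ⟨Int.even_iff.mp hex, Int.odd_iff.mp hoz,
        Int.odd_iff.mp ((Int.odd_mul).mp hzc).2, Int.odd_iff.mp hoy⟩
    · right; right
      have hzc : Odd (z * c) := by
        have h1 : Even (x * y) := hey.mul_left x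
        have h3 : z * c = x * y - e := by linarith
        rw [h3]
        exact h1.sub_odd he_odd
      exact ⟨Int.odd_iff.mp hox, Int.odd_iff.mp hoz,
        Int.odd_iff.mp ((Int.odd_mul).mp hzc).2, Int.even_iff.mp hey⟩
  have hαS : α * (y:ℝ) ≤ (z:ℝ) := by rw [mul_comm]; exact hαf
  have hβS : β * (z:ℝ) ≤ (x:ℝ) := by rw [mul_comm]; exact hβf
  rcases he with rfl | rfl
  · -- e = 1
    by_cases hxy2 : 2 ≤ x * y
    · right
      have hzle : z ≤ x * y - 1 := Int.le_of_dvd (by omega) ⟨c, hc⟩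
      have hc1 : 1 ≤ c := by
        have h1 : z * 1 ≤ z * c := by linarith
        exact le_of_mul_le_mul_left h1 (by omega)
      have hcx : c ≤ x := by
        have h1 : x * y ≤ x * z := mul_le_mul_of_nonneg_left hyz h0x
        have h2 : z * c < z * x := by nlinarith
        exact le_of_lt (lt_of_mul_lt_mul_left h2 (by omega))
      exact build (Or.inl rfl) ⟨by linarith, hpar, h0x, h0z, by omega, h0y, hyz, hc1, hcx,
        fun _ => hgf, fun h => absurd h (by norm_num), htr, hαS, hβS⟩
    · have h0xy : 0 ≤ x * y := mul_nonneg h0x h0y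
      rcases (by omega : x * y = 0 ∨ x * y = 1) with hxy | hxy
      · have hy0 : y = 0 := by
          rcases mul_eq_zero.mp hxy with h | h
          · omega
          · exact h
        have hz1' : z = 1 := by
          have h4 : z ∣ (1:ℤ) := ⟨-c, by linarith⟩
          have := Int.le_of_dvd one_pos h4
          omega
        rcases hpar with ⟨-, hz2, -, -⟩ | ⟨-, -, -, hy2⟩ | ⟨-, -, -, -⟩
        · omega
        · omega
        · left
          have hM : Mset 1 N = (fun x : ℤ => ((1:ℤ), x, (0:ℤ))) '' Set.Icc 1 (N:ℤ) :=
            if_pos rfl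
          rw [hM]
          exact ⟨x, Set.mem_Icc.mpr ⟨hx1, by omega⟩, by rw [hz1', hy0]⟩
      · exfalso
        obtain ⟨hxe, hye⟩ : x = 1 ∧ y = 1 := by
          rcases Int.mul_eq_one_iff_eq_one_or_neg_one.mp hxy with ⟨h1, h2⟩ | ⟨h1, h2⟩
          · exact ⟨h1, h2⟩
          · omega
        rcases hrest with ⟨-, -, hz2⟩ | ⟨-, -, -, hex⟩ | ⟨-, -, -, hey⟩
        · have h2z : (2:ℝ) ≤ (z:ℝ) := by exact_mod_cast hz2
          have h5 : gphi * 2 ≤ gphi * (z:ℝ) := mul_le_mul_of_nonneg_left h2z hg0.le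
          have hx1R : (x:ℝ) = 1 := by rw [hxe]; norm_num
          have h6 := one_lt_two_mul_gphi
          rw [hx1R] at hgf
          linarith
        · rw [hxe] at hex; exact (by decide : ¬ Even (1:ℤ)) hex
        · rw [hye] at hey; exact (by decide : ¬ Even (1:ℤ)) hey
  · -- e = -1
    have hc' : x * y + 1 = z * c := by linarith
    have hc1 : 1 ≤ c := by
      have hzle : z ≤ x * y + 1 := Int.le_of_dvd (by nlinarith) ⟨c, by linarith⟩
      have h1 : z * 1 ≤ z * c := by linarith
      exact le_of_mul_le_mul_left h1 (by omega)
    rcases eq_or_lt_of_le hyz with heq | hlt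
    · have hz1' : z = 1 := by
        have h4 : z ∣ (1:ℤ) := ⟨c - x, by rw [heq] at hc'; linarith⟩
        have := Int.le_of_dvd one_pos h4
        omega
      have hy1 : y = 1 := by omega
      rcases hpar with ⟨-, hz2, -, -⟩ | ⟨hx2, -, -, -⟩ | ⟨-, -, -, hy2⟩
      · omega
      · left
        have hM : Mset (-1) N = (fun x : ℤ => ((1:ℤ), x, (1:ℤ))) '' Set.Icc 2 ((N:ℤ) + 1) :=
          if_neg (by norm_num)
        rw [hM]
        exact ⟨x, Set.mem_Icc.mpr ⟨by omega, by omega⟩, by rw [hz1', hy1]⟩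
      · omega
    · right
      have hcx : c ≤ x := by
        have h1 : x * y ≤ x * (z - 1) := mul_le_mul_of_nonneg_left (by omega) h0x
        have h2 : z * c ≤ z * x := by nlinarith
        exact le_of_mul_le_mul_left h2 (by omega)
      exact build (Or.inr rfl) ⟨by linarith, hpar, h0x, h0z, by omega, h0y, hyz, hc1, hcx,
        fun h => absurd h (by norm_num), fun _ => strict_G hz1 (hβ' rfl) hβS, htr, hαS, hβS⟩

lemma Abound {e : ℤ} (he : e = 1 ∨ e = -1) {α β : ℝ} {N : ℕ}
    (hα : 1 ≤ α) (hβ : gphi ≤ β) (hβ' : e = -1 → Gphi + 1 ≤ β) :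
    Aset1 e α β N ∪ Aset2 e α β N ∪ Aset3 e α β N ⊆
      Set.Icc ((0:ℤ), (0:ℤ), (0:ℤ)) ((2*N+2 : ℤ), (2*N+2 : ℤ), (2*N+2 : ℤ)) := by
  rintro ⟨z, x, y⟩ ht
  simp only [Set.mem_union, Aset1, Aset2, Aset3, Set.mem_setOf_eq] at ht
  obtain ⟨h0z, h0x, h0y, hαf, hβf, hgf, htr, -⟩ :
      0 ≤ z ∧ 0 ≤ x ∧ 0 ≤ y ∧ (y:ℝ) * α ≤ (z:ℝ) ∧ (z:ℝ) * β ≤ (x:ℝ) ∧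
        gphi * (z:ℝ) < (x:ℝ) ∧ x + e * y ≤ (N:ℤ) ∧ True := by
    rcases ht with (⟨a1,a2,a3,a4,a5,a6,a7,-⟩ | ⟨a1,a2,a3,a4,a5,a6,a7,-⟩) |
      ⟨a1,a2,a3,a4,a5,a6,a7,-⟩ <;> exact ⟨a1,a2,a3,a4,a5,a6,a7,trivial⟩
  have hyz : y ≤ z := by
    have h1 : (y:ℝ) * 1 ≤ (y:ℝ) * α := mul_le_mul_of_nonneg_left hα (by exact_mod_cast h0y)
    rw [mul_one] at h1
    have : (y:ℝ) ≤ (z:ℝ) := le_trans h1 hαf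
    exact_mod_cast this
  have hz2x : z ≤ 2 * x := by
    have h1 : (z:ℝ) * 1 ≤ (z:ℝ) * (2 * gphi) :=
      mul_le_mul_of_nonneg_left one_lt_two_mul_gphi.le (by exact_mod_cast h0z)
    rw [mul_one] at h1
    have h2 : (z:ℝ) ≤ ((2 * x : ℤ) : ℝ) := by push_cast; nlinarith [hgf]
    exact_mod_cast h2
  rcases he with rfl | rfl
  · have hxN : x ≤ (N:ℤ) := by omega
    simp only [Set.mem_Icc, Prod.mk_le_mk]
    exact ⟨⟨h0z, h0x, h0y⟩, ⟨by omega, by omega, by omega⟩⟩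
  · have h2β : (2:ℝ) ≤ β := le_trans two_le_Gphi_add_one (hβ' rfl)
    have h2zx : 2 * z ≤ x := by
      have h1 : (z:ℝ) * 2 ≤ (z:ℝ) * β := mul_le_mul_of_nonneg_left h2β (by exact_mod_cast h0z)
      have h2 : ((2 * z : ℤ) : ℝ) ≤ (x:ℝ) := by push_cast; linarith [hβf]
      exact_mod_cast h2
    have hxN : x ≤ 2 * (N:ℤ) := by omega
    simp only [Set.mem_Icc, Prod.mk_le_mk]
    exact ⟨⟨h0z, h0x, h0y⟩, ⟨by omega, by omega, by omega⟩⟩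

end ParamAux


open ParamAux

theorem parametrization_of_Stilde :
    ∃ C : ℝ, 0 < C ∧ ∀ (e : ℤ) (α β : ℝ) (N : ℕ),
      (e = 1 ∨ e = -1) → 1 ≤ α → gphi ≤ β → (e = -1 → Gphi + 1 ≤ β) →
      Set.InjOn (fun σ : Matrix (Fin 2) (Fin 2) ℤ => (e * σ 0 1, σ 0 0, e * σ 1 1))
        (StildeE e α β N) ∧
      Set.MapsTo (fun σ : Matrix (Fin 2) (Fin 2) ℤ => (e * σ 0 1, σ 0 0, e * σ 1 1))
        (StildeE e α β N) (Aset1 e α β N ∪ Aset2 e α β N ∪ Aset3 e α β N) ∧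
      |((StildeE e α β N).ncard : ℝ) -
          (((Aset1 e α β N).ncard : ℝ) + ((Aset2 e α β N).ncard : ℝ) +
            ((Aset3 e α β N).ncard : ℝ))| ≤ C * (N : ℝ) := by
  refine ⟨1, one_pos, ?_⟩
  intro e α β N he hα hβ hβ'
  refine ⟨injOn_aux he, mapsTo_aux he, ?_⟩
  set Φ := fun σ : Matrix (Fin 2) (Fin 2) ℤ => (e * σ 0 1, σ 0 0, e * σ 1 1) with hΦ
  set S := StildeE e α β N with hS
  set A1 := Aset1 e α β N with hA1
  set A2 := Aset2 e α β N with hA2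
  set A3 := Aset3 e α β N with hA3
  have hUfin : (A1 ∪ A2 ∪ A3).Finite :=
    (Set.finite_Icc _ _).subset (Abound he hα hβ hβ')
  have hA1fin : A1.Finite := hUfin.subset (fun t ht => Or.inl (Or.inl ht))
  have hA2fin : A2.Finite := hUfin.subset (fun t ht => Or.inl (Or.inr ht))
  have hA3fin : A3.Finite := hUfin.subset (fun t ht => Or.inr ht)
  have himsub : Φ '' S ⊆ A1 ∪ A2 ∪ A3 := (mapsTo_aux he).image_subset
  have hSfin : S.Finite := Set.Finite.of_finite_image (hUfin.subset himsub) (injOn_aux he)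
  have hdisj12 : Disjoint A1 A2 := by
    rw [Set.disjoint_left]
    rintro ⟨z, x, y⟩ h1 h2
    obtain ⟨-, -, -, -, -, -, -, -, hev, -⟩ := h1
    obtain ⟨-, -, -, -, -, -, -, -, hodd, -⟩ := h2
    exact (Int.not_odd_iff_even.mpr hev) hodd
  have hdisj13 : Disjoint A1 A3 := by
    rw [Set.disjoint_left]
    rintro ⟨z, x, y⟩ h1 h2
    obtain ⟨-, -, -, -, -, -, -, -, hev, -⟩ := h1
    obtain ⟨-, -, -, -, -, -, -, -, -, hodd, -⟩ := h2
    exact (Int.not_odd_iff_even.mpr hev) hodd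
  have hdisj23 : Disjoint A2 A3 := by
    rw [Set.disjoint_left]
    rintro ⟨z, x, y⟩ h1 h2
    obtain ⟨-, -, -, -, -, -, -, -, -, -, hev⟩ := h1
    obtain ⟨-, -, -, -, -, -, -, -, hodd, -⟩ := h2
    exact (Int.not_odd_iff_even.mpr hev) hodd
  have hcardU : (A1 ∪ A2 ∪ A3).ncard = A1.ncard + A2.ncard + A3.ncard := by
    rw [Set.ncard_union_eq (Set.disjoint_union_left.mpr ⟨hdisj13, hdisj23⟩)
      (hA1fin.union hA2fin) hA3fin,
      Set.ncard_union_eq hdisj12 hA1fin hA2fin]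
  have hdiffsub : (A1 ∪ A2 ∪ A3) \ (Φ '' S) ⊆ Mset e N := by
    rintro t ⟨ht, htn⟩
    rcases cover_aux he hα hβ hβ' t ht with h | h
    · exact h
    · exact absurd h htn
  have hkey := Set.ncard_diff_add_ncard_of_subset himsub hUfin
  have him : (Φ '' S).ncard = S.ncard := Set.ncard_image_of_injOn (injOn_aux he)
  have hmle : ((A1 ∪ A2 ∪ A3) \ (Φ '' S)).ncard ≤ N :=
    le_trans (Set.ncard_le_ncard hdiffsub (Mset_finite e N)) (Mset_ncard e N)
  have hnat : A1.ncard + A2.ncard + A3.ncard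
      = ((A1 ∪ A2 ∪ A3) \ (Φ '' S)).ncard + S.ncard := by omega
  have hcast : ((A1.ncard : ℝ) + (A2.ncard : ℝ) + (A3.ncard : ℝ))
      = (((A1 ∪ A2 ∪ A3) \ (Φ '' S)).ncard : ℝ) + (S.ncard : ℝ) := by
    exact_mod_cast congrArg (fun n : ℕ => (n : ℝ)) hnat
  rw [hcast, one_mul]
  have : (S.ncard : ℝ) - ((((A1 ∪ A2 ∪ A3) \ (Φ '' S)).ncard : ℝ) + (S.ncard : ℝ))
      = -((((A1 ∪ A2 ∪ A3) \ (Φ '' S)).ncard : ℝ)) := by ring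
  rw [this, abs_neg, abs_of_nonneg (by positivity)]
  exact_mod_cast hmle
end
end

section
/- Let (aₙ)ₙ≥₁ be a sequence of odd positive integers and (eₙ)ₙ≥₀ a sequence with e₀ = 1, eₙ ∈ {+1,−1}, and aₙ + eₙ ≥ 2 for all n ≥ 1, and let pₙ, qₙ be the associated OCF convergent numerators and denominators. Then for all n ≥ 1: if eₙ = +1 then pₙ/pₙ₋₁ ≥ g and qₙ/qₙ₋₁ ≥ g, and if eₙ = −1 then pₙ/pₙ₋₁ ≥ G+1 and qₙ/qₙ₋₁ ≥ G+1 (for the q-ratios, n ≥ 2 so that qₙ₋₁ > 0). -/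
noncomputable section

private lemma inv_step (s ar er x y z : ℝ) (hs : s*s = 5) (hs3 : s < 3)
    (hx : 0 < x) (hy : 0 < y) (hz : z = ar*y + er*x)
    (her : er = 1 ∨ er = -1)
    (hrprev : er = -1 → (3+s)/2 ≤ y/x) :
    ∀ b : ℝ, b + (3-s)/2 ≤ ar → b ≤ z/y := by
  intro b hb
  rw [le_div_iff₀ hy]
  rcases her with h | h
  · rw [h] at hz
    nlinarith [mul_le_mul_of_nonneg_right (show b ≤ ar by nlinarith) hy.le]
  · rw [h] at hz
    have hxy : (3+s)/2 * x ≤ y := by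
      have := hrprev h
      rw [le_div_iff₀ hx] at this
      linarith
    have h1 : (0:ℝ) ≤ (3-s)/2 := by linarith
    nlinarith [mul_le_mul_of_nonneg_right hb hy.le,
      mul_le_mul_of_nonneg_left hxy h1]

private lemma full_step (s : ℝ) (hs : s*s = 5) (hs2 : 2 < s) (hs3 : s < 3)
    (an ec : ℤ) (er x y z : ℝ) (hx : 0 < x) (hy : 0 < y)
    (hz : z = (an:ℝ)*y + er*x)
    (her : er = 1 ∨ er = -1)
    (hrprev : er = -1 → (3+s)/2 ≤ y/x)
    (ha1 : 1 ≤ an) (hec : ec = 1 ∨ ec = -1) (hae : 2 ≤ an + ec) :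
    0 < z ∧ (ec = 1 → (s-1)/2 ≤ z/y) ∧ (ec = -1 → (3+s)/2 ≤ z/y) := by
  have main := inv_step s (an:ℝ) er x y z hs hs3 hx hy hz her hrprev
  have har : (1:ℝ) ≤ (an:ℝ) := by exact_mod_cast ha1
  have h1 : ec = 1 → (s-1)/2 ≤ z/y := fun _ => main _ (by linarith)
  have h2 : ec = -1 → (3+s)/2 ≤ z/y := by
    intro h
    have h3 : (3:ℤ) ≤ an := by omega
    have h3r : (3:ℝ) ≤ (an:ℝ) := by exact_mod_cast h3
    exact main _ (by linarith)
  have hzpos : 0 < z := by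
    have hr : (s-1)/2 ≤ z/y := by
      rcases hec with h | h
      · exact h1 h
      · exact le_trans (by linarith) (h2 h)
    have hry : 0 < z/y := lt_of_lt_of_le (by linarith) hr
    have := mul_pos hry hy
    rwa [div_mul_cancel₀ _ hy.ne'] at this
  exact ⟨hzpos, h1, h2⟩

theorem convergent_ratio_bounds (a e p q : ℕ → ℤ)
    (ha : ∀ n, 1 ≤ n → Odd (a n) ∧ 0 < a n)
    (he0 : e 0 = 1) (he : ∀ n, 1 ≤ n → (e n = 1 ∨ e n = -1) ∧ 2 ≤ a n + e n)
    (hp0 : p 0 = 1) (hp1 : p 1 = a 1)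
    (hp : ∀ n, 2 ≤ n → p n = a n * p (n - 1) + e (n - 1) * p (n - 2))
    (hq0 : q 0 = 0) (hq1 : q 1 = 1)
    (hq : ∀ n, 2 ≤ n → q n = a n * q (n - 1) + e (n - 1) * q (n - 2)) :
    ∀ n, 1 ≤ n →
      (e n = 1 → gphi ≤ (p n : ℝ) / (p (n - 1) : ℝ) ∧
        (2 ≤ n → gphi ≤ (q n : ℝ) / (q (n - 1) : ℝ))) ∧
      (e n = -1 → Gphi + 1 ≤ (p n : ℝ) / (p (n - 1) : ℝ) ∧
        (2 ≤ n → Gphi + 1 ≤ (q n : ℝ) / (q (n - 1) : ℝ))) := by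
  set s := Real.sqrt 5 with hsdef
  have hs : s * s = 5 := Real.mul_self_sqrt (by norm_num)
  have hs0 : 0 ≤ s := Real.sqrt_nonneg 5
  have hs2 : 2 < s := by nlinarith
  have hs3 : s < 3 := by nlinarith
  -- invariant for p
  have hP : ∀ n, 1 ≤ n → 0 < ((p (n-1) : ℤ) : ℝ) ∧ 0 < ((p n : ℤ) : ℝ) ∧
      (e n = 1 → (s-1)/2 ≤ (p n : ℝ) / (p (n-1) : ℝ)) ∧
      (e n = -1 → (3+s)/2 ≤ (p n : ℝ) / (p (n-1) : ℝ)) := by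
    intro n hn
    induction n, hn using Nat.le_induction with
    | base =>
      have ha1 : 1 ≤ a 1 := (ha 1 le_rfl).2
      have har : (1:ℝ) ≤ ((a 1 : ℤ) : ℝ) := by exact_mod_cast ha1
      have hratio : ((p 1 : ℤ) : ℝ) / ((p 0 : ℤ) : ℝ) = ((a 1 : ℤ) : ℝ) := by
        rw [hp0, hp1]; norm_num
      refine ⟨by rw [hp0]; norm_num, by rw [hp1]; exact_mod_cast lt_of_lt_of_le one_pos ha1, ?_, ?_⟩
      · intro _; rw [hratio]; linarith
      · intro h
        have h3 : (3:ℤ) ≤ a 1 := by have := (he 1 le_rfl).2; omega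
        have h3r : (3:ℝ) ≤ ((a 1 : ℤ) : ℝ) := by exact_mod_cast h3
        rw [hratio]; linarith
    | succ n hn IH =>
      obtain ⟨hx, hy, hr1, hr2⟩ := IH
      have hrec := hp (n+1) (by omega)
      have e1 : n + 1 - 1 = n := by omega
      have e2 : n + 1 - 2 = n - 1 := by omega
      rw [e1, e2] at hrec
      have hz : ((p (n+1) : ℤ) : ℝ) = ((a (n+1) : ℤ) : ℝ) * (p n : ℝ) + ((e n : ℤ) : ℝ) * (p (n-1) : ℝ) := by
        exact_mod_cast congrArg (Int.cast : ℤ → ℝ) hrec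
      have her : ((e n : ℤ) : ℝ) = 1 ∨ ((e n : ℤ) : ℝ) = -1 := by
        rcases (he n hn).1 with h | h
        · left; exact_mod_cast h
        · right; exact_mod_cast h
      have hrprev : ((e n : ℤ) : ℝ) = -1 → (3+s)/2 ≤ (p n : ℝ) / (p (n-1) : ℝ) :=
        fun h => hr2 (by exact_mod_cast h)
      have hstep := full_step s hs hs2 hs3 (a (n+1)) (e (n+1)) _ _ _ _ hx hy hz her hrprev
        (ha (n+1) (by omega)).2 (he (n+1) (by omega)).1 (he (n+1) (by omega)).2
      simp only [Nat.add_sub_cancel]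
      exact ⟨hy, hstep.1, hstep.2.1, hstep.2.2⟩
  -- invariant for q
  have hQ : ∀ n, 2 ≤ n → 0 < ((q (n-1) : ℤ) : ℝ) ∧ 0 < ((q n : ℤ) : ℝ) ∧
      (e n = 1 → (s-1)/2 ≤ (q n : ℝ) / (q (n-1) : ℝ)) ∧
      (e n = -1 → (3+s)/2 ≤ (q n : ℝ) / (q (n-1) : ℝ)) := by
    intro n hn
    induction n, hn using Nat.le_induction with
    | base =>
      have hq2 : q 2 = a 2 := by
        have := hq 2 le_rfl
        norm_num [hq0, hq1] at this
        exact this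
      have ha1 : 1 ≤ a 2 := (ha 2 (by omega)).2
      have har : (1:ℝ) ≤ ((a 2 : ℤ) : ℝ) := by exact_mod_cast ha1
      have hratio : ((q 2 : ℤ) : ℝ) / ((q (2-1) : ℤ) : ℝ) = ((a 2 : ℤ) : ℝ) := by
        norm_num [hq1, hq2]
      refine ⟨by norm_num [hq1], by rw [hq2]; exact_mod_cast lt_of_lt_of_le one_pos ha1, ?_, ?_⟩
      · intro _; rw [hratio]; linarith
      · intro h
        have h3 : (3:ℤ) ≤ a 2 := by have := (he 2 (by omega)).2; omega
        have h3r : (3:ℝ) ≤ ((a 2 : ℤ) : ℝ) := by exact_mod_cast h3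
        rw [hratio]; linarith
    | succ n hn IH =>
      obtain ⟨hx, hy, hr1, hr2⟩ := IH
      have hrec := hq (n+1) (by omega)
      have e1 : n + 1 - 1 = n := by omega
      have e2 : n + 1 - 2 = n - 1 := by omega
      rw [e1, e2] at hrec
      have hz : ((q (n+1) : ℤ) : ℝ) = ((a (n+1) : ℤ) : ℝ) * (q n : ℝ) + ((e n : ℤ) : ℝ) * (q (n-1) : ℝ) := by
        exact_mod_cast congrArg (Int.cast : ℤ → ℝ) hrec
      have her : ((e n : ℤ) : ℝ) = 1 ∨ ((e n : ℤ) : ℝ) = -1 := by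
        rcases (he n (by omega)).1 with h | h
        · left; exact_mod_cast h
        · right; exact_mod_cast h
      have hrprev : ((e n : ℤ) : ℝ) = -1 → (3+s)/2 ≤ (q n : ℝ) / (q (n-1) : ℝ) :=
        fun h => hr2 (by exact_mod_cast h)
      have hstep := full_step s hs hs2 hs3 (a (n+1)) (e (n+1)) _ _ _ _ hx hy hz her hrprev
        (ha (n+1) (by omega)).2 (he (n+1) (by omega)).1 (he (n+1) (by omega)).2
      simp only [Nat.add_sub_cancel]
      exact ⟨hy, hstep.1, hstep.2.1, hstep.2.2⟩
  -- conclude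
  have hG : Gphi + 1 = (3 + s)/2 := by rw [Gphi]; ring
  have hg : gphi = (s - 1)/2 := rfl
  intro n hn
  obtain ⟨_, _, hpr1, hpr2⟩ := hP n hn
  constructor
  · intro h
    refine ⟨by rw [hg]; exact hpr1 h, fun h2 => ?_⟩
    obtain ⟨_, _, hqr1, _⟩ := hQ n h2
    rw [hg]; exact hqr1 h
  · intro h
    refine ⟨by rw [hG]; exact hpr2 h, fun h2 => ?_⟩
    obtain ⟨_, _, _, hqr2⟩ := hQ n h2
    rw [hG]; exact hqr2 h
end
end
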